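/- arXiv:2409.03859 — 6 statements merged into one kernel-verified Lean document; each statement's English description precedes it below -/
import Mathlib

section
/- Parametrize 3×3 integer matrices w with row and column sums both (3,2,1) by integer vectors m = (a,b,c,d)^T ∈ ℤ⁴ via w = [[1,1,1],[1,1,0],[1,0,0]] + [[a,b,-a-b],[c,d,-c-d],[-a-c,-b-d,a+b+c+d]]. Then this map is a bijection from ℤ⁴ onto the set of such matrices, and F(w) := Σ_{i,j} w_{ij}(w_{ij}-1)/2 satisfies F(w) = (1/2) m^T A m + d - a, where A = [[4,2,2,1],[2,4,1,2],[2,1,4,2],[1,2,2,4]]. -/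
/-- The parametrization of 3×3 integer matrices with row and column sums `(3,2,1)`
by vectors `m = (a,b,c,d) ∈ ℤ⁴`. -/
noncomputable def stmt1Param (m : Fin 4 → ℤ) : Matrix (Fin 3) (Fin 3) ℤ :=
  !![1, 1, 1; 1, 1, 0; 1, 0, 0] +
  !![m 0, m 1, -m 0 - m 1;
     m 2, m 3, -m 2 - m 3;
     -m 0 - m 2, -m 1 - m 3, m 0 + m 1 + m 2 + m 3]

/-- The matrix `A` of the quadratic form. -/
noncomputable def stmt1A : Matrix (Fin 4) (Fin 4) ℤ :=
  !![4, 2, 2, 1; 2, 4, 1, 2; 2, 1, 4, 2; 1, 2, 2, 4]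

lemma stmt1_key (x : ℤ) : 2 * (x * (x - 1) / 2) = x * (x - 1) :=
  Int.two_mul_ediv_two_of_even (by
    have := Int.even_mul_succ_self (x - 1)
    rw [mul_comm] at this
    simpa using this)

/-- the parametrization is a bijection from `ℤ⁴` onto the set of 3×3
integer matrices with row and column sums `(3,2,1)`, and
`F(w) = (1/2) mᵀ A m + d - a` (stated multiplied by 2 to stay in `ℤ`). -/
theorem stmt1 :
    Set.BijOn stmt1Param Set.univ
      {w : Matrix (Fin 3) (Fin 3) ℤ |
        (∀ i, ∑ j, w i j = ![3, 2, 1] i) ∧ (∀ j, ∑ i, w i j = ![3, 2, 1] j)} ∧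
    ∀ m : Fin 4 → ℤ,
      2 * (∑ i, ∑ j, stmt1Param m i j * (stmt1Param m i j - 1) / 2) =
        dotProduct m (stmt1A.mulVec m) + 2 * (m 3 - m 0) := by
  constructor
  · refine ⟨?_, ?_, ?_⟩
    · intro m _
      constructor
      · intro i
        fin_cases i <;>
          simp [stmt1Param, Fin.sum_univ_succ, Matrix.add_apply] <;> ring
      · intro j
        fin_cases j <;>
          simp [stmt1Param, Fin.sum_univ_succ, Matrix.add_apply] <;> ring
    · intro m _ m' _ h
      funext i
      have h00 := congrFun (congrFun h 0) 0
      have h01 := congrFun (congrFun h 0) 1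
      have h10 := congrFun (congrFun h 1) 0
      have h11 := congrFun (congrFun h 1) 1
      simp [stmt1Param, Matrix.add_apply] at h00 h01 h10 h11
      fin_cases i <;> simpa using ‹_›
    · intro w hw
      obtain ⟨hr, hc⟩ := hw
      refine ⟨![w 0 0 - 1, w 0 1 - 1, w 1 0 - 1, w 1 1 - 1], Set.mem_univ _, ?_⟩
      have hr0 := hr 0
      have hr1 := hr 1
      have hr2 := hr 2
      have hc0 := hc 0
      have hc1 := hc 1
      have hc2 := hc 2
      simp [Fin.sum_univ_succ, Matrix.vecHead, Matrix.vecTail] at hr0 hr1 hr2 hc0 hc1 hc2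
      ext i j
      fin_cases i <;> fin_cases j <;>
        simp [stmt1Param, Matrix.add_apply, Matrix.vecHead, Matrix.vecTail] <;> omega
  · intro m
    simp only [Fin.sum_univ_succ, Fin.sum_univ_zero, add_zero, mul_add, stmt1_key]
    simp [stmt1Param, stmt1A, dotProduct, Matrix.mulVec, Fin.sum_univ_succ,
      Matrix.add_apply, Matrix.vecHead, Matrix.vecTail, show (2 : Fin 3).succ = 3 from rfl]
    ring
end

section
/- Fix vectors e ∈ ℤⁿ and f ∈ ℤ^m with Σᵢ eᵢ = Σⱼ fⱼ. There is a bijection between the set M(e,f) of generalized Maya diagrams with margins (e,f) and C(e,f) × Pⁿᵐ, where C(e,f) is the set of n×m integer matrices c with row sums e and column sums f, and P is the set of integer partitions. Under this bijection, a Maya diagram with parameter d corresponds to a pair (c, (λ_{ij})) with d = Σ_{i,j} c_{ij}(c_{ij}-1)/2 + Σ_{i,j} |λ_{ij}|. -/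
/-- A generalized Maya diagram with `n` rows (D5 branes) and `m` columns (NS5 branes):
a doubly infinite sequence of `n × m` 01-matrices (blocks), eventually all `0` to the
left and all `1` to the right.  The block with index `k : ℤ` is the block at
half-integer position `k + 1/2`; so negative blocks have `k < 0` and positive blocks
have `0 ≤ k`. -/
structure GenMaya (n m : ℕ) where
  entry : ℤ → Fin n → Fin m → Bool
  eventually_zero : ∃ N : ℕ, ∀ k : ℤ, k < -(N : ℤ) → ∀ i j, entry k i j = false
  eventually_one : ∃ N : ℕ, ∀ k : ℤ, (N : ℤ) < k → ∀ i j, entry k i j = true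

/-- Row margin: `e i` = #(0s in row `i` of positive blocks) − #(1s in row `i` of
negative blocks). -/
noncomputable def GenMaya.rowCharge {n m : ℕ} (M : GenMaya n m) (i : Fin n) : ℤ :=
  (Nat.card {p : ℤ × Fin m // 0 ≤ p.1 ∧ M.entry p.1 i p.2 = false} : ℤ) -
  (Nat.card {p : ℤ × Fin m // p.1 < 0 ∧ M.entry p.1 i p.2 = true} : ℤ)

/-- Column margin: `f j` = #(0s in column `j` of positive blocks) − #(1s in column `j`
of negative blocks). -/
noncomputable def GenMaya.colCharge {n m : ℕ} (M : GenMaya n m) (j : Fin m) : ℤ :=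
  (Nat.card {p : ℤ × Fin n // 0 ≤ p.1 ∧ M.entry p.1 p.2 j = false} : ℤ) -
  (Nat.card {p : ℤ × Fin n // p.1 < 0 ∧ M.entry p.1 p.2 j = true} : ℤ)

/-- The dimension parameter: `d = Σ_{k ≥ 1} k·#(1s in block −(2k−1)/2)
+ Σ_{k ≥ 1} k·#(0s in block (2k+1)/2)`; in our indexing, block `−(2k−1)/2` has
index `−k` and block `(2k+1)/2` has index `k`. -/
noncomputable def GenMaya.dParam {n m : ℕ} (M : GenMaya n m) : ℕ :=
  (∑' k : ℕ, (k + 1) *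
      Nat.card {p : Fin n × Fin m // M.entry (-(k + 1 : ℕ) : ℤ) p.1 p.2 = true}) +
  (∑' k : ℕ, (k + 1) *
      Nat.card {p : Fin n × Fin m // M.entry ((k + 1 : ℕ) : ℤ) p.1 p.2 = false})

/-- The set of arbitrary partitions, with their size. -/
def PartitionSigma : Type := Σ k : ℕ, Nat.Partition k


open Finset in
private lemma Usum (m : ℕ) : 2 * (∑ i ∈ Finset.range m, ((i : ℤ) + 1)) = m * (m + 1) := by
  induction m with
  | zero => simp
  | succ k ih =>
    rw [Finset.sum_range_succ, mul_add, ih]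
    push_cast; ring

private lemma strictAnti_add_antitone {r : ℕ → ℤ} (h : StrictAnti r) :
    Antitone (fun i => r i + i) := by
  apply antitone_nat_of_succ_le
  intro i
  have := h (Nat.lt_succ_self i)
  have h2 : r (i+1) < r i := this
  push_cast; omega

private lemma strictAnti_le {r : ℕ → ℤ} (h : StrictAnti r) {i j : ℕ} (hij : i ≤ j) :
    r j + j ≤ r i + i := strictAnti_add_antitone h hij

/-- Two strictly antitone integer sequences with the same range are equal. -/
private lemma strictAnti_range_eq {r r' : ℕ → ℤ} (h : StrictAnti r) (h' : StrictAnti r')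
    (hr : Set.range r = Set.range r') : r = r' := by
  funext n
  induction n using Nat.strong_induction_on with
  | _ n ih =>
    obtain ⟨j, hj⟩ : r n ∈ Set.range r' := hr ▸ Set.mem_range_self n
    obtain ⟨i, hi⟩ : r' n ∈ Set.range r := hr.symm ▸ Set.mem_range_self n
    have h1 : r n ≤ r' n := by
      rcases lt_or_ge j n with hjn | hjn
      · exfalso
        have h3 : r j = r n := (ih j hjn).trans hj
        have h4 : r n < r j := h hjn
        omega
      · calc r n = r' j := hj.symm
          _ ≤ r' n := h'.antitone hjn
    have h2 : r' n ≤ r n := by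
      rcases lt_or_ge i n with hin | hin
      · exfalso
        have h3 : r' i = r' n := (ih i hin).symm.trans hi
        have h4 : r' n < r' i := h' hin
        omega
      · calc r' n = r i := hi.symm
          _ ≤ r n := h.antitone hin
    omega

noncomputable def chargeS (s : ℤ → Bool) : ℤ :=
  (Nat.card {k : ℤ // 0 ≤ k ∧ s k = false} : ℤ) -
  (Nat.card {k : ℤ // k < 0 ∧ s k = true} : ℤ)

noncomputable def dvalS (s : ℤ → Bool) : ℕ :=
  (∑' k : ℕ, (k + 1) * (if s (-(k + 1 : ℕ) : ℤ) = true then 1 else 0)) +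
  (∑' k : ℕ, (k + 1) * (if s ((k + 1 : ℕ) : ℤ) = false then 1 else 0))

private lemma core (s : ℤ → Bool) (r : ℕ → ℤ) (c : ℤ) (l : ℕ → ℕ) (N : ℕ)
    (hr : ∀ k, s k = false ↔ k ∈ Set.range r)
    (hra : StrictAnti r)
    (hrl : ∀ i, r i = c - 1 - i + l i)
    (hN : ∀ i, N ≤ i → l i = 0) :
    chargeS s = c ∧ (dvalS s : ℤ) = c * (c - 1) / 2 + ∑ i ∈ Finset.range N, (l i : ℤ) := by
  classical
  set i0 : ℕ := N + c.toNat with hi0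
  set A : ℕ := i0 + 1 with hA
  have hli0 : l i0 = 0 := hN _ (by omega)
  have hri0 : r i0 = c - 1 - i0 := by rw [hrl]; simp [hli0]
  have hci0 : c ≤ (i0 : ℤ) := by
    have := Int.self_le_toNat c
    push_cast [hi0]; omega
  set KZ : ℤ := (A : ℤ) - c with hKZ
  have hKpos : (1 : ℤ) ≤ KZ := by rw [hKZ]; push_cast [hA]; omega
  have hKnn : (KZ.toNat : ℤ) = KZ := Int.toNat_of_nonneg (by omega)
  have hrneg : r i0 = -KZ := by rw [hri0, hKZ]; push_cast [hA]; ring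
  -- low positions are zeros
  have hlow : ∀ k : ℤ, k < r i0 → s k = false := by
    intro k hk
    rw [hr]
    rw [hri0] at hk
    refine ⟨(c - 1 - k).toNat, ?_⟩
    have h2 : ((c - 1 - k).toNat : ℤ) = c - 1 - k := Int.toNat_of_nonneg (by omega)
    have h3 : N ≤ (c - 1 - k).toNat := by omega
    rw [hrl, hN _ h3]
    push_cast [h2]; omega
  have hhigh : ∀ k : ℤ, r 0 < k → s k = true := by
    intro k hk
    cases hcase : s k with
    | true => rfl
    | false =>
      exfalso
      obtain ⟨i, hi⟩ := (hr k).1 hcase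
      have := hra.antitone (Nat.zero_le i)
      omega
  have hmono : ∀ i, i ≤ i0 → -KZ ≤ r i := fun i hi => hrneg ▸ hra.antitone hi
  have hmono2 : ∀ i, i0 < i → r i < -KZ := fun i hi => hrneg ▸ hra hi
  -- Finsets
  set S0 : Finset ℕ := (Finset.range A).filter (fun i => 0 ≤ r i) with hS0
  set S1 : Finset ℕ := (Finset.range A).filter (fun i => r i < 0) with hS1
  set IccNeg : Finset ℤ := Finset.Icc (-KZ) (-1) with hIcc
  set B : ℕ := (r 0).toNat with hB
  have hBr : r 0 ≤ (B : ℤ) := Int.self_le_toNat _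
  set ZF : Finset ℤ := (Finset.Icc (0 : ℤ) (B : ℤ)).filter (fun k => s k = false) with hZF
  set OF : Finset ℤ := IccNeg.filter (fun k => s k = true) with hOF
  have hrinj : Function.Injective r := hra.injective
  have hZeq : ZF = S0.image r := by
    ext k
    simp only [hZF, hS0, Finset.mem_filter, Finset.mem_Icc, Finset.mem_image, Finset.mem_range]
    constructor
    · rintro ⟨⟨hk0, hkB⟩, hsk⟩
      obtain ⟨i, hi⟩ := (hr k).1 hsk
      refine ⟨i, ⟨?_, by omega⟩, hi⟩
      by_contra hiA
      have := hmono2 i (by omega)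
      omega
    · rintro ⟨i, ⟨hiA, hi0le⟩, rfl⟩
      have h1 : r i ≤ r 0 := hra.antitone (Nat.zero_le i)
      exact ⟨⟨hi0le, by omega⟩, (hr _).2 ⟨i, rfl⟩⟩
  have himg1 : S1.image r ⊆ IccNeg := by
    intro k hk
    simp only [hS1, Finset.mem_image, Finset.mem_filter, Finset.mem_range] at hk
    obtain ⟨i, ⟨hiA, hineg⟩, rfl⟩ := hk
    simp only [hIcc, Finset.mem_Icc]
    exact ⟨hmono i (by omega), by omega⟩
  have hOeq : OF = IccNeg \ S1.image r := by
    ext k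
    simp only [hOF, Finset.mem_filter, Finset.mem_sdiff, Finset.mem_image, hS1,
      Finset.mem_range]
    constructor
    · rintro ⟨hk, hsk⟩
      refine ⟨hk, ?_⟩
      rintro ⟨i, ⟨hiA, hineg⟩, rfl⟩
      have h0 := (hr (r i)).2 ⟨i, rfl⟩
      rw [h0] at hsk
      exact Bool.false_ne_true hsk
    · rintro ⟨hk, hnk⟩
      refine ⟨hk, ?_⟩
      cases hcase : s k with
      | true => rfl
      | false =>
        exfalso
        obtain ⟨i, rfl⟩ := (hr k).1 hcase
        simp only [hIcc, Finset.mem_Icc] at hk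
        refine hnk ⟨i, ⟨?_, by omega⟩, rfl⟩
        by_contra hiA
        have := hmono2 i (by omega)
        omega
  have hcard1 : Nat.card {k : ℤ // 0 ≤ k ∧ s k = false} = S0.card := by
    have h0 : Nat.card {k : ℤ // 0 ≤ k ∧ s k = false}
        = ({k : ℤ | 0 ≤ k ∧ s k = false}).ncard := Nat.card_coe_set_eq _
    have hset : {k : ℤ | 0 ≤ k ∧ s k = false} = (↑ZF : Set ℤ) := by
      ext k
      simp only [Set.mem_setOf_eq, hZF, Finset.coe_filter, Finset.mem_Icc, Set.mem_setOf_eq]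
      constructor
      · rintro ⟨hk0, hsk⟩
        obtain ⟨i, hi⟩ := (hr k).1 hsk
        have h1 : r i ≤ r 0 := hra.antitone (Nat.zero_le i)
        exact ⟨⟨hk0, by omega⟩, hsk⟩
      · tauto
    rw [h0, hset, Set.ncard_coe_finset, hZeq,
      Finset.card_image_of_injective _ hrinj]
  have hcard2 : Nat.card {k : ℤ // k < 0 ∧ s k = true} = OF.card := by
    have h0 : Nat.card {k : ℤ // k < 0 ∧ s k = true}
        = ({k : ℤ | k < 0 ∧ s k = true}).ncard := Nat.card_coe_set_eq _
    have hset : {k : ℤ | k < 0 ∧ s k = true} = (↑OF : Set ℤ) := by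
      ext k
      simp only [Set.mem_setOf_eq, hOF, Finset.coe_filter, Set.mem_setOf_eq, hIcc,
        Finset.mem_Icc]
      constructor
      · rintro ⟨hk0, hsk⟩
        refine ⟨⟨?_, by omega⟩, hsk⟩
        by_contra hlt
        have : s k = false := hlow k (by omega)
        rw [this] at hsk
        exact Bool.false_ne_true hsk
      · rintro ⟨⟨_, hk1⟩, hsk⟩
        exact ⟨by omega, hsk⟩
    rw [h0, hset, Set.ncard_coe_finset]
  have hcardIcc : IccNeg.card = KZ.toNat := by
    rw [hIcc, Int.card_Icc]
    congr 1
    omega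
  have hS1le : S1.card ≤ KZ.toNat := by
    rw [← hcardIcc, ← Finset.card_image_of_injective S1 hrinj]
    exact Finset.card_le_card himg1
  have hcardOF : OF.card = KZ.toNat - S1.card := by
    rw [hOeq, Finset.card_sdiff_of_subset himg1, Finset.card_image_of_injective _ hrinj, hcardIcc]
  have hS1' : S1 = (Finset.range A).filter (fun i => ¬ 0 ≤ r i) := by
    rw [hS1]
    apply Finset.filter_congr
    intro i _
    simp [not_le]
  have hpart : S0.card + S1.card = A := by
    rw [hS0, hS1']
    rw [Finset.card_filter_add_card_filter_not (p := fun i => 0 ≤ r i)]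
    exact Finset.card_range A
  constructor
  · rw [chargeS, hcard1, hcard2, hcardOF]
    have : ((KZ.toNat - S1.card : ℕ) : ℤ) = KZ - S1.card := by
      rw [Nat.cast_sub hS1le, hKnn]
    rw [this]
    have hpz : (S0.card : ℤ) + S1.card = A := by exact_mod_cast hpart
    omega
  -- the d computation
  · have ht1 : (∑' k : ℕ, (k + 1) * (if s (-(k + 1 : ℕ) : ℤ) = true then 1 else 0))
        = ∑ k ∈ Finset.range KZ.toNat,
            (k + 1) * (if s (-(k + 1 : ℕ) : ℤ) = true then 1 else 0) := by
      apply tsum_eq_sum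
      intro k hk
      simp only [Finset.mem_range, not_lt] at hk
      have hkk : (-(k + 1 : ℕ) : ℤ) < r i0 := by
        rw [hrneg]; push_cast; omega
      rw [hlow _ hkk]
      simp
    have ht2 : (∑' k : ℕ, (k + 1) * (if s ((k + 1 : ℕ) : ℤ) = false then 1 else 0))
        = ∑ k ∈ Finset.range B,
            (k + 1) * (if s ((k + 1 : ℕ) : ℤ) = false then 1 else 0) := by
      apply tsum_eq_sum
      intro k hk
      simp only [Finset.mem_range, not_lt] at hk
      rw [hhigh _ (by push_cast; omega)]
      simp
    have hneg : ((∑ k ∈ Finset.range KZ.toNat,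
          (k + 1) * (if s (-(k + 1 : ℕ) : ℤ) = true then 1 else 0) : ℕ) : ℤ)
        = ∑ k ∈ OF, (-k) := by
      rw [hOF, Finset.sum_filter]
      push_cast
      refine Finset.sum_nbij' (i := fun (k : ℕ) => (-(k + 1) : ℤ))
        (j := fun (k : ℤ) => (-k - 1).toNat) ?_ ?_ ?_ ?_ ?_
      · intro a ha
        simp only [Finset.mem_range] at ha
        simp only [hIcc, Finset.mem_Icc]
        omega
      · intro a ha
        simp only [hIcc, Finset.mem_Icc] at ha
        simp only [Finset.mem_range]
        omega
      · intro a ha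
        beta_reduce
        omega
      · intro a ha
        simp only [hIcc, Finset.mem_Icc] at ha
        beta_reduce
        omega
      · intro a ha
        push_cast
        beta_reduce
        split <;> simp <;> ring
    have hpos : ((∑ k ∈ Finset.range B,
          (k + 1) * (if s ((k + 1 : ℕ) : ℤ) = false then 1 else 0) : ℕ) : ℤ)
        = ∑ k ∈ (Finset.Icc (1 : ℤ) (B : ℤ)).filter (fun k => s k = false), k := by
      rw [Finset.sum_filter]
      push_cast
      refine Finset.sum_nbij' (i := fun (k : ℕ) => ((k : ℤ) + 1))
        (j := fun (k : ℤ) => (k - 1).toNat) ?_ ?_ ?_ ?_ ?_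
      · intro a ha
        simp only [Finset.mem_range] at ha
        simp only [Finset.mem_Icc]
        omega
      · intro a ha
        simp only [Finset.mem_Icc] at ha
        simp only [Finset.mem_range]
        omega
      · intro a ha
        beta_reduce
        omega
      · intro a ha
        simp only [Finset.mem_Icc] at ha
        beta_reduce
        push_cast
        omega
      · intro a ha
        push_cast
        beta_reduce
        split <;> simp
    have hZF' : ∑ k ∈ (Finset.Icc (1 : ℤ) (B : ℤ)).filter (fun k => s k = false), k
        = ∑ k ∈ ZF, k := by
      apply Finset.sum_subset
      · rw [hZF]
        exact Finset.filter_subset_filter _ (Finset.Icc_subset_Icc (by norm_num) le_rfl)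
      · intro x hx hnx
        simp only [hZF, Finset.mem_filter, Finset.mem_Icc] at hx
        simp only [Finset.mem_filter, Finset.mem_Icc] at hnx
        by_contra h0
        exact hnx ⟨⟨by omega, hx.1.2⟩, hx.2⟩
    have hsumZ : ∑ k ∈ ZF, k = ∑ i ∈ S0, r i := by
      rw [hZeq]
      rw [Finset.sum_image (fun x _ y _ h => hrinj h)]
    have hsumO : ∑ k ∈ OF, (-k) = (∑ k ∈ IccNeg, (-k)) + ∑ i ∈ S1, r i := by
      rw [hOeq, Finset.sum_sdiff_eq_sub himg1,
        Finset.sum_image (fun x _ y _ h => hrinj h)]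
      simp only [Finset.sum_neg_distrib]
      ring
    have hIccsum : ∑ k ∈ IccNeg, (-k) = ∑ i ∈ Finset.range KZ.toNat, ((i : ℤ) + 1) := by
      refine Finset.sum_nbij' (i := fun (k : ℤ) => (-k - 1).toNat)
        (j := fun (k : ℕ) => (-(k + 1) : ℤ)) ?_ ?_ ?_ ?_ ?_
      · intro a ha
        simp only [hIcc, Finset.mem_Icc] at ha
        simp only [Finset.mem_range]
        omega
      · intro a ha
        simp only [Finset.mem_range] at ha
        simp only [hIcc, Finset.mem_Icc]
        omega
      · intro a ha
        simp only [hIcc, Finset.mem_Icc] at ha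
        beta_reduce
        omega
      · intro a ha
        beta_reduce
        omega
      · intro a ha
        simp only [hIcc, Finset.mem_Icc] at ha
        beta_reduce
        push_cast
        omega
    have hsplit : ∑ i ∈ S0, r i + ∑ i ∈ S1, r i = ∑ i ∈ Finset.range A, r i := by
      rw [hS0, hS1']
      exact Finset.sum_filter_add_sum_filter_not _ _ _
    have hrange : ∑ i ∈ Finset.range A, r i
        = (A : ℤ) * c - (∑ i ∈ Finset.range A, ((i : ℤ) + 1))
          + ∑ i ∈ Finset.range A, (l i : ℤ) := by
      rw [Finset.sum_congr rfl (fun i _ => hrl i)]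
      rw [Finset.sum_add_distrib]
      congr 1
      have h : ∀ i : ℕ, c - 1 - (i : ℤ) = c - ((i : ℤ) + 1) := by intro i; ring
      simp_rw [h]
      rw [Finset.sum_sub_distrib, Finset.sum_const, Finset.card_range, nsmul_eq_mul]
    have hlsum : ∑ i ∈ Finset.range A, (l i : ℤ) = ∑ i ∈ Finset.range N, (l i : ℤ) := by
      symm
      apply Finset.sum_subset (Finset.range_subset_range.2 (by omega))
      intro x _ hx
      simp only [Finset.mem_range, not_lt] at hx
      simp [hN x hx]
    have e1 : (dvalS s : ℤ)
        = (∑ i ∈ Finset.range KZ.toNat, ((i : ℤ) + 1)) + (A : ℤ) * c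
          - (∑ i ∈ Finset.range A, ((i : ℤ) + 1)) + ∑ i ∈ Finset.range N, (l i : ℤ) := by
      rw [dvalS, ht1, ht2, Nat.cast_add, hneg, hpos, hZF', hsumZ, hsumO, hIccsum]
      linarith [hsplit, hrange, hlsum]
    rw [e1]
    have u1 := Usum KZ.toNat
    have u2 := Usum A
    have h2 : c * (c - 1)
        = 2 * ((∑ i ∈ Finset.range KZ.toNat, ((i : ℤ) + 1)) + (A : ℤ) * c
            - (∑ i ∈ Finset.range A, ((i : ℤ) + 1))) := by
      have h3 : 2 * ((∑ i ∈ Finset.range KZ.toNat, ((i : ℤ) + 1)) + (A : ℤ) * c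
          - (∑ i ∈ Finset.range A, ((i : ℤ) + 1)))
          = (KZ.toNat : ℤ) * (KZ.toNat + 1) + 2 * A * c - A * (A + 1) := by
        linarith [u1, u2]
      rw [h3, hKnn, hKZ]
      ring
    have h4 : c * (c - 1) / 2
        = (∑ i ∈ Finset.range KZ.toNat, ((i : ℤ) + 1)) + (A : ℤ) * c
          - (∑ i ∈ Finset.range A, ((i : ℤ) + 1)) := by
      rw [h2, Int.mul_ediv_cancel_left _ two_ne_zero]
    rw [h4]

def MSeq : Type :=
  {s : ℤ → Bool // (∃ N : ℕ, ∀ k : ℤ, k < -(N : ℤ) → s k = false) ∧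
    (∃ N : ℕ, ∀ k : ℤ, (N : ℤ) < k → s k = true)}

namespace MSeq

lemma exists_lt (s : MSeq) (b : ℤ) : ∃ z, z < b ∧ s.1 z = false := by
  obtain ⟨N, hN⟩ := s.2.1
  exact ⟨min (-(N : ℤ)) b - 1, ⟨by omega, hN _ (by omega)⟩⟩

lemma bddAbove (s : MSeq) : ∃ B : ℤ, ∀ k, s.1 k = false → k ≤ B := by
  obtain ⟨N, hN⟩ := s.2.2
  refine ⟨N, fun k hk => ?_⟩
  by_contra h
  rw [hN k (by omega)] at hk
  simp at hk

/-- greatest zero-position strictly below `b` -/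
noncomputable def gb (s : MSeq) (b : ℤ) : ℤ :=
  Classical.choose (Int.exists_greatest_of_bdd
    (P := fun z => z < b ∧ s.1 z = false)
    ⟨b, fun z hz => le_of_lt hz.1⟩ (s.exists_lt b))

lemma gb_spec (s : MSeq) (b : ℤ) :
    ((s.gb b) < b ∧ s.1 (s.gb b) = false) ∧ ∀ z, z < b ∧ s.1 z = false → z ≤ s.gb b :=
  Classical.choose_spec (Int.exists_greatest_of_bdd
    (P := fun z => z < b ∧ s.1 z = false)
    ⟨b, fun z hz => le_of_lt hz.1⟩ (s.exists_lt b))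

/-- the strictly decreasing enumeration of the zero-positions -/
noncomputable def rfun (s : MSeq) : ℕ → ℤ
  | 0 => s.gb (Classical.choose s.bddAbove + 1)
  | (i + 1) => s.gb (s.rfun i)

lemma rfun_false (s : MSeq) (i : ℕ) : s.1 (s.rfun i) = false := by
  cases i with
  | zero => exact (s.gb_spec _).1.2
  | succ i => exact (s.gb_spec _).1.2

lemma rfun_strictAnti (s : MSeq) : StrictAnti s.rfun := by
  apply strictAnti_nat_of_succ_lt
  intro i
  exact (s.gb_spec (s.rfun i)).1.1


lemma rfun_top (s : MSeq) (k : ℤ) (hk : s.1 k = false) : k ≤ s.rfun 0 := by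
  apply (s.gb_spec _).2
  exact ⟨by have := Classical.choose_spec s.bddAbove k hk; omega, hk⟩

lemma rfun_max (s : MSeq) (i : ℕ) (k : ℤ) (hk : s.1 k = false) (hlt : k < s.rfun i) :
    k ≤ s.rfun (i + 1) :=
  (s.gb_spec (s.rfun i)).2 k ⟨hlt, hk⟩

lemma rfun_le (s : MSeq) (i : ℕ) : s.rfun i + i ≤ s.rfun 0 := by
  induction i with
  | zero => simp
  | succ i ih =>
    have : s.rfun (i+1) < s.rfun i := s.rfun_strictAnti (by omega)
    push_cast
    push_cast at ih
    omega

lemma rfun_range (s : MSeq) (k : ℤ) : s.1 k = false ↔ k ∈ Set.range s.rfun := by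
  constructor
  · intro hk
    have hex : ∃ i : ℕ, s.rfun i < k := by
      refine ⟨(s.rfun 0 - k + 1).toNat, ?_⟩
      have := s.rfun_le (s.rfun 0 - k + 1).toNat
      omega
    classical
    have hjlt : s.rfun (Nat.find hex) < k := Nat.find_spec hex
    have hj0 : Nat.find hex ≠ 0 := by
      intro h0
      have := s.rfun_top k hk
      rw [h0] at hjlt
      omega
    obtain ⟨i, hji⟩ := Nat.exists_eq_succ_of_ne_zero hj0
    have hige : ¬ s.rfun i < k := Nat.find_min hex (by omega)
    rw [hji] at hjlt
    simp only [Nat.succ_eq_add_one] at hjlt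
    rcases eq_or_lt_of_le (not_lt.1 hige) with h | h
    · exact ⟨i, h.symm⟩
    · exfalso
      have h2 := s.rfun_max i k hk h
      omega
  · rintro ⟨i, rfl⟩
    exact s.rfun_false i

lemma rfun_eventual (s : MSeq) : ∃ c : ℤ, ∃ N : ℕ, ∀ i, N ≤ i → s.rfun i = c - 1 - i := by
  obtain ⟨N₁, hN₁⟩ := s.2.1
  have hstep : ∀ i : ℕ, s.rfun i ≤ -(N₁ : ℤ) → s.rfun (i + 1) = s.rfun i - 1 := by
    intro i hi
    have h1 : s.1 (s.rfun i - 1) = false := hN₁ _ (by omega)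
    have h2 := s.rfun_max i _ h1 (by omega)
    have h3 : s.rfun (i+1) < s.rfun i := s.rfun_strictAnti (by omega)
    omega
  set N : ℕ := (s.rfun 0 + N₁).toNat with hN
  have hNlow : ∀ i, N ≤ i → s.rfun i ≤ -(N₁ : ℤ) := by
    intro i hi
    have := s.rfun_le i
    omega
  refine ⟨s.rfun N + 1 + N, N, ?_⟩
  intro i hi
  obtain ⟨j, rfl⟩ := Nat.exists_eq_add_of_le hi
  induction j with
  | zero => simp only [Nat.add_zero]; push_cast; ring
  | succ j ih =>
    have h1 : s.rfun (N + j + 1) = s.rfun (N + j) - 1 :=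
      hstep _ (hNlow _ (by omega))
    have h2 := ih (by omega)
    rw [show N + (j+1) = N + j + 1 from rfl, h1, h2]
    push_cast
    ring

noncomputable def cOf (s : MSeq) : ℤ := Classical.choose s.rfun_eventual

noncomputable def NOf (s : MSeq) : ℕ := Classical.choose (Classical.choose_spec s.rfun_eventual)

lemma rfun_spec (s : MSeq) : ∀ i, s.NOf ≤ i → s.rfun i = s.cOf - 1 - i :=
  Classical.choose_spec (Classical.choose_spec s.rfun_eventual)

lemma rfun_ge (s : MSeq) (i : ℕ) : s.cOf - 1 - i ≤ s.rfun i := by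
  set j := max i s.NOf with hj
  have h1 : s.rfun j = s.cOf - 1 - j := s.rfun_spec j (le_max_right _ _)
  have h2 : s.rfun j + j ≤ s.rfun i + i := by
    have : Antitone (fun i => s.rfun i + i) := by
      apply antitone_nat_of_succ_le
      intro n
      have : s.rfun (n+1) < s.rfun n := s.rfun_strictAnti (by omega)
      push_cast
      omega
    exact this (le_max_left _ _)
  omega

noncomputable def lOf (s : MSeq) (i : ℕ) : ℕ := (s.rfun i - (s.cOf - 1 - i)).toNat

lemma lOf_spec (s : MSeq) (i : ℕ) : (s.lOf i : ℤ) = s.rfun i - (s.cOf - 1 - i) := by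
  rw [lOf, Int.toNat_of_nonneg]
  have := s.rfun_ge i
  omega

lemma lOf_zero (s : MSeq) (i : ℕ) (hi : s.NOf ≤ i) : s.lOf i = 0 := by
  have h := s.rfun_spec i hi
  rw [lOf, h]
  simp

lemma lOf_antitone (s : MSeq) : Antitone s.lOf := by
  apply antitone_nat_of_succ_le
  intro i
  have h1 := s.lOf_spec i
  have h2 := s.lOf_spec (i + 1)
  have h3 : s.rfun (i+1) < s.rfun i := s.rfun_strictAnti (by omega)
  push_cast at h2
  omega

end MSeq


def Atype : Type := {l : ℕ → ℕ // Antitone l ∧ ∃ N : ℕ, ∀ i, N ≤ i → l i = 0}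

private lemma list_sum_range (f : ℕ → ℕ) (n : ℕ) :
    ((List.range n).map f).sum = ∑ i ∈ Finset.range n, f i := by
  induction n with
  | zero => simp
  | succ k ih =>
    rw [List.range_succ, List.map_append, List.sum_append, Finset.sum_range_succ, ih]
    simp

private lemma sum_filter_ne_zero (L : List ℕ) :
    (L.filter (fun x => x ≠ 0)).sum = L.sum := by
  induction L with
  | nil => simp
  | cons a t ih =>
    have ih' : (List.filter (fun x => !decide (x = 0)) t).sum = t.sum := by
      simpa [ne_eq] using ih
    by_cases h : a = 0 <;> simp [List.filter_cons, h, ih']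

private lemma filter_map_range (l : ℕ → ℕ) (t N : ℕ) (htN : t ≤ N)
    (hpos : ∀ i, i < t → l i ≠ 0) (hzero : ∀ i, t ≤ i → l i = 0) :
    ((List.range N).map l).filter (fun x => x ≠ 0) = (List.range t).map l := by
  induction N with
  | zero =>
    have ht : t = 0 := by omega
    subst ht; simp
  | succ n ih =>
    rcases (by omega : t ≤ n ∨ t = n + 1) with h | h
    · rw [List.range_succ, List.map_append, List.filter_append, ih h]
      have h0 : l n = 0 := hzero n h
      simp [h0]
    · rw [h]
      apply List.filter_eq_self.2
      intro x hx
      simp only [List.mem_map, List.mem_range] at hx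
      obtain ⟨i, hi, rfl⟩ := hx
      simpa using hpos i (by omega)

private lemma sorted_map_range (l : ℕ → ℕ) (hl : Antitone l) (n : ℕ) :
    ((List.range n).map l).Pairwise (· ≥ ·) := by
  rw [List.pairwise_iff_get]
  intro i j hij
  simp only [List.get_eq_getElem, List.getElem_map, List.getElem_range]
  exact hl (le_of_lt (by
    have hi := i.2
    have hj := j.2
    simp only [List.length_map, List.length_range] at hi hj
    exact_mod_cast hij))

private lemma sort_coe_eq (L : List ℕ) (h : L.Pairwise (· ≥ ·)) :
    (↑L : Multiset ℕ).sort (· ≥ ·) = L := by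
  apply List.Perm.eq_of_pairwise' (Multiset.pairwise_sort _ _) h
  exact Multiset.coe_eq_coe.1 (Multiset.sort_eq _ _)

open Classical in
noncomputable def AtoP (a : Atype) : PartitionSigma :=
  ⟨((((List.range (Nat.find a.2.2)).map a.1).filter (fun x => x ≠ 0) : List ℕ) : Multiset ℕ).sum,
   ⟨(((List.range (Nat.find a.2.2)).map a.1).filter (fun x => x ≠ 0) : List ℕ), by
      intro i hi
      rw [Multiset.mem_coe, List.mem_filter] at hi
      have h2 := hi.2
      simp only [ne_eq, decide_not, Bool.not_eq_true', decide_eq_false_iff_not] at h2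
      omega, rfl⟩⟩

noncomputable def PtoA (p : PartitionSigma) : Atype := by
  refine ⟨fun i => (p.2.parts.sort (· ≥ ·)).getD i 0, ?_, ?_⟩
  · intro i j hij
    set L := p.2.parts.sort (· ≥ ·) with hL
    have hsorted : L.Pairwise (· ≥ ·) := Multiset.pairwise_sort _ _
    rcases lt_or_ge j L.length with hj | hj
    · have hi : i < L.length := lt_of_le_of_lt hij hj
      rcases eq_or_lt_of_le hij with rfl | hlt
      · exact le_refl _
      · have h3 := List.pairwise_iff_get.1 hsorted ⟨i, hi⟩ ⟨j, hj⟩ hlt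
        show L.getD j 0 ≤ L.getD i 0
        rw [List.getD_eq_getElem _ _ hi, List.getD_eq_getElem _ _ hj]
        exact h3
    · show L.getD j 0 ≤ L.getD i 0
      rw [List.getD_eq_default _ _ hj]
      exact Nat.zero_le _
  · refine ⟨(p.2.parts.sort (· ≥ ·)).length, fun i hi => ?_⟩
    exact List.getD_eq_default _ _ hi

private lemma sum_range_stable (f : ℕ → ℕ) {N M : ℕ} (hN : ∀ i, N ≤ i → f i = 0)
    (hM : ∀ i, M ≤ i → f i = 0) : ∑ i ∈ Finset.range N, f i = ∑ i ∈ Finset.range M, f i := by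
  have key : ∀ P Q : ℕ, (∀ i, P ≤ i → f i = 0) → P ≤ Q →
      ∑ i ∈ Finset.range P, f i = ∑ i ∈ Finset.range Q, f i := by
    intro P Q hP hPQ
    apply Finset.sum_subset (Finset.range_subset_range.2 hPQ)
    intro x _ hx
    simp only [Finset.mem_range, not_lt] at hx
    exact hP x hx
  calc ∑ i ∈ Finset.range N, f i = ∑ i ∈ Finset.range (max N M), f i :=
        key _ _ hN (le_max_left _ _)
    _ = ∑ i ∈ Finset.range M, f i := (key _ _ hM (le_max_right _ _)).symm

lemma AtoP_fst (a : Atype) (N : ℕ) (hN : ∀ i, N ≤ i → a.1 i = 0) :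
    (AtoP a).1 = ∑ i ∈ Finset.range N, a.1 i := by
  classical
  show ((((List.range (Nat.find a.2.2)).map a.1).filter (fun x => x ≠ 0) : List ℕ)
      : Multiset ℕ).sum = _
  rw [Multiset.sum_coe, sum_filter_ne_zero, list_sum_range]
  exact sum_range_stable a.1 (Nat.find_spec a.2.2) hN

lemma PS_ext (x y : PartitionSigma) (h : x.2.parts = y.2.parts) : x = y := by
  obtain ⟨k1, p1⟩ := x
  obtain ⟨k2, p2⟩ := y
  have hk : k1 = k2 := by rw [← p1.parts_sum, ← p2.parts_sum, h]
  subst hk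
  congr 1
  exact Nat.Partition.ext h

lemma PtoA_AtoP (a : Atype) : PtoA (AtoP a) = a := by
  classical
  have hNs : ∀ i, Nat.find a.2.2 ≤ i → a.1 i = 0 := Nat.find_spec a.2.2
  set N := Nat.find a.2.2 with hNdef
  have hzt : ∃ j, a.1 j = 0 := ⟨N, hNs N le_rfl⟩
  set t := Nat.find hzt with htdef
  have htpos : ∀ i, i < t → a.1 i ≠ 0 := fun i hi => Nat.find_min hzt hi
  have htzero : ∀ i, t ≤ i → a.1 i = 0 := by
    intro i hi
    have h1 : a.1 i ≤ a.1 t := a.2.1 hi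
    have h2 : a.1 t = 0 := Nat.find_spec hzt
    omega
  have htN : t ≤ N := Nat.find_min' hzt (hNs N le_rfl)
  have hfil : ((List.range N).map a.1).filter (fun x => x ≠ 0) = (List.range t).map a.1 :=
    filter_map_range a.1 t N htN htpos htzero
  have hparts : (AtoP a).2.parts
      = (↑(((List.range N).map a.1).filter (fun x => x ≠ 0)) : Multiset ℕ) := rfl
  apply Subtype.ext
  show (fun i => ((AtoP a).2.parts.sort (· ≥ ·)).getD i 0) = a.1
  rw [hparts, hfil, sort_coe_eq _ (sorted_map_range a.1 a.2.1 t)]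
  funext i
  rcases lt_or_ge i t with hi | hi
  · have hlen : i < ((List.range t).map a.1).length := by simp [hi]
    rw [List.getD_eq_getElem _ _ hlen]
    simp
  · have hlen : ((List.range t).map a.1).length ≤ i := by simp [hi]
    rw [List.getD_eq_default _ _ hlen]
    exact (htzero i hi).symm

lemma AtoP_PtoA (p : PartitionSigma) : AtoP (PtoA p) = p := by
  classical
  set L := p.2.parts.sort (· ≥ ·) with hL
  have hLpos : ∀ x ∈ L, 0 < x := by
    intro x hx
    exact p.2.parts_pos ((Multiset.mem_sort _).1 hx)
  have hs1 : (PtoA p).1 = fun i => L.getD i 0 := rfl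
  have hz : ∀ i, L.length ≤ i → (PtoA p).1 i = 0 := by
    intro i hi
    rw [hs1]
    exact List.getD_eq_default _ _ hi
  have hfind : Nat.find (PtoA p).2.2 = L.length := by
    apply le_antisymm
    · exact Nat.find_min' _ hz
    · by_contra h
      push_neg at h
      have h0 := Nat.find_spec (PtoA p).2.2 (Nat.find (PtoA p).2.2) le_rfl
      have h0' : L.getD (Nat.find (PtoA p).2.2) 0 = 0 :=
        (congrFun hs1 _).symm.trans h0
      have hlt : Nat.find (PtoA p).2.2 < L.length := h
      have h1 : L.getD (Nat.find (PtoA p).2.2) 0 = L[Nat.find (PtoA p).2.2] :=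
        List.getD_eq_getElem _ _ hlt
      have hmem : L[Nat.find (PtoA p).2.2] ∈ L := List.getElem_mem _
      have := hLpos _ hmem
      omega
  have hmap : (List.range L.length).map (PtoA p).1 = L := by
    apply List.ext_getElem (by simp)
    intro i h1 h2
    simp only [List.getElem_map, List.getElem_range, hs1]
    exact List.getD_eq_getElem _ _ h2
  have hfilter : ((List.range (Nat.find (PtoA p).2.2)).map (PtoA p).1).filter
      (fun x => x ≠ 0) = L := by
    rw [hfind, hmap]
    apply List.filter_eq_self.2
    intro x hx
    simpa using (hLpos x hx).ne'
  apply PS_ext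
  show (↑(((List.range (Nat.find (PtoA p).2.2)).map (PtoA p).1).filter (fun x => x ≠ 0))
      : Multiset ℕ) = p.2.parts
  rw [hfilter, hL, Multiset.sort_eq]

noncomputable def AP : Atype ≃ PartitionSigma where
  toFun := AtoP
  invFun := PtoA
  left_inv := PtoA_AtoP
  right_inv := AtoP_PtoA

namespace MSeq

noncomputable def rOf (c : ℤ) (a : Atype) : ℕ → ℤ := fun i => c - 1 - i + a.1 i

lemma rOf_strictAnti (c : ℤ) (a : Atype) : StrictAnti (rOf c a) := by
  apply strictAnti_nat_of_succ_lt
  intro i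
  have h : a.1 (i + 1) ≤ a.1 i := a.2.1 (Nat.le_succ i)
  simp only [rOf]
  push_cast
  omega

open Classical in
noncomputable def ofZA (c : ℤ) (a : Atype) : MSeq := by
  refine ⟨fun k => if k ∈ Set.range (rOf c a) then false else true, ?_, ?_⟩
  · obtain ⟨Na, hNa⟩ := a.2.2
    refine ⟨(Na - c + 1).toNat, fun k hk => ?_⟩
    have hk' : k ≤ c - 1 - Na := by omega
    have hmem : k ∈ Set.range (rOf c a) := by
      refine ⟨(c - 1 - k).toNat, ?_⟩
      have h1 : ((c - 1 - k).toNat : ℤ) = c - 1 - k := Int.toNat_of_nonneg (by omega)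
      have h2 : Na ≤ (c - 1 - k).toNat := by omega
      simp only [rOf, hNa _ h2]
      push_cast
      omega
    beta_reduce
    rw [if_pos hmem]
  · refine ⟨(c + a.1 0).toNat, fun k hk => ?_⟩
    beta_reduce
    rw [if_neg]
    rintro ⟨i, hi⟩
    simp only [rOf] at hi
    have h1 : a.1 i ≤ a.1 0 := a.2.1 (Nat.zero_le i)
    have h2 : (c + a.1 0 : ℤ) ≤ ((c + a.1 0).toNat : ℤ) := Int.self_le_toNat _
    push_cast at h2
    omega

open Classical in
lemma ofZA_val (c : ℤ) (a : Atype) (k : ℤ) :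
    (ofZA c a).1 k = false ↔ k ∈ Set.range (rOf c a) := by
  show (if k ∈ Set.range (rOf c a) then false else true) = false ↔ _
  split_ifs with h <;> simp [h]

lemma rfun_ofZA (c : ℤ) (a : Atype) : (ofZA c a).rfun = rOf c a := by
  apply strictAnti_range_eq (ofZA c a).rfun_strictAnti (rOf_strictAnti c a)
  ext k
  constructor
  · intro hk
    exact (ofZA_val c a k).1 (((ofZA c a).rfun_range k).2 hk)
  · intro hk
    exact ((ofZA c a).rfun_range k).1 ((ofZA_val c a k).2 hk)

lemma cOf_ofZA (c : ℤ) (a : Atype) : (ofZA c a).cOf = c := by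
  obtain ⟨Na, hNa⟩ := a.2.2
  set s := ofZA c a with hs
  set i := max s.NOf Na with hi
  have h1 : s.rfun i = s.cOf - 1 - i := s.rfun_spec i (le_max_left _ _)
  have h2 : s.rfun i = c - 1 - i + a.1 i := congrFun (rfun_ofZA c a) i
  rw [hNa i (le_max_right _ _)] at h2
  push_cast at h2
  omega

lemma lOf_ofZA (c : ℤ) (a : Atype) : (ofZA c a).lOf = a.1 := by
  funext i
  have h1 := (ofZA c a).lOf_spec i
  have h2 : (ofZA c a).rfun i = c - 1 - i + a.1 i := congrFun (rfun_ofZA c a) i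
  rw [cOf_ofZA] at h1
  omega

noncomputable def ZA : MSeq ≃ ℤ × Atype where
  toFun s := (s.cOf, ⟨s.lOf, s.lOf_antitone, ⟨s.NOf, s.lOf_zero⟩⟩)
  invFun p := ofZA p.1 p.2
  left_inv s := by
    apply Subtype.ext
    funext k
    set a : Atype := ⟨s.lOf, s.lOf_antitone, ⟨s.NOf, s.lOf_zero⟩⟩ with ha
    have hro : rOf s.cOf a = s.rfun := by
      funext i
      simp only [rOf, ha]
      have := s.lOf_spec i
      omega
    have hval := ofZA_val s.cOf a k
    rw [hro] at hval
    rw [← s.rfun_range k] at hval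
    show (ofZA s.cOf a).1 k = s.1 k
    cases hx : (ofZA s.cOf a).1 k <;> cases hy : s.1 k <;> simp_all
  right_inv p := by
    obtain ⟨c, a⟩ := p
    exact Prod.ext (cOf_ofZA c a) (Subtype.ext (lOf_ofZA c a))

lemma charge_fact (s : MSeq) : chargeS s.1 = s.cOf ∧
    (dvalS s.1 : ℤ) = s.cOf * (s.cOf - 1) / 2 + ∑ i ∈ Finset.range s.NOf, (s.lOf i : ℤ) := by
  apply core s.1 s.rfun s.cOf s.lOf s.NOf s.rfun_range s.rfun_strictAnti
  · intro i
    have := s.lOf_spec i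
    omega
  · exact s.lOf_zero

end MSeq

noncomputable def seqOf {n m : ℕ} (M : GenMaya n m) (i : Fin n) (j : Fin m) : MSeq :=
  ⟨fun k => M.entry k i j,
   by obtain ⟨N, hN⟩ := M.eventually_zero
      exact ⟨N, fun k hk => hN k hk i j⟩,
   by obtain ⟨N, hN⟩ := M.eventually_one
      exact ⟨N, fun k hk => hN k hk i j⟩⟩

noncomputable def bigE (n m : ℕ) : GenMaya n m ≃ (Fin n → Fin m → MSeq) where
  toFun M i j := seqOf M i j
  invFun g := ⟨fun k i j => (g i j).1 k,
    by
      choose F hF using fun (p : Fin n × Fin m) => (g p.1 p.2).2.1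
      refine ⟨Finset.univ.sup F, fun k hk i j => ?_⟩
      apply hF (i, j)
      have h1 : F (i, j) ≤ Finset.univ.sup F := Finset.le_sup (Finset.mem_univ _)
      have h2 : ((F (i, j) : ℤ)) ≤ ((Finset.univ.sup F : ℕ) : ℤ) := by exact_mod_cast h1
      omega,
    by
      choose F hF using fun (p : Fin n × Fin m) => (g p.1 p.2).2.2
      refine ⟨Finset.univ.sup F, fun k hk i j => ?_⟩
      apply hF (i, j)
      have h1 : F (i, j) ≤ Finset.univ.sup F := Finset.le_sup (Finset.mem_univ _)
      have h2 : ((F (i, j) : ℤ)) ≤ ((Finset.univ.sup F : ℕ) : ℤ) := by exact_mod_cast h1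
      omega⟩
  left_inv M := rfl
  right_inv g := rfl

private lemma natcard_split {m : ℕ} (P : ℤ → Fin m → Prop)
    (hfin : ∀ j, Set.Finite {k : ℤ | P k j}) :
    Nat.card {p : ℤ × Fin m // P p.1 p.2} = ∑ j : Fin m, Nat.card {k : ℤ // P k j} := by
  classical
  have e : {p : ℤ × Fin m // P p.1 p.2} ≃ (Σ j : Fin m, {k : ℤ // P k j}) :=
    { toFun := fun x => ⟨x.1.2, ⟨x.1.1, x.2⟩⟩
      invFun := fun x => ⟨(x.2.1, x.1), x.2.2⟩
      left_inv := fun x => rfl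
      right_inv := fun x => rfl }
  rw [Nat.card_congr e]
  haveI h1 : ∀ j, Finite {k : ℤ // P k j} := fun j => (hfin j).to_subtype
  haveI h2 : ∀ j, Fintype {k : ℤ // P k j} := fun j => Fintype.ofFinite _
  rw [Nat.card_eq_fintype_card, Fintype.card_sigma]
  simp [Nat.card_eq_fintype_card]

lemma rowCharge_eq {n m : ℕ} (M : GenMaya n m) (i : Fin n) :
    M.rowCharge i = ∑ j, chargeS (seqOf M i j).1 := by
  rw [GenMaya.rowCharge]
  obtain ⟨N2, hN2⟩ := M.eventually_one
  obtain ⟨N1, hN1⟩ := M.eventually_zero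
  have h1 : Nat.card {p : ℤ × Fin m // 0 ≤ p.1 ∧ M.entry p.1 i p.2 = false}
      = ∑ j, Nat.card {k : ℤ // 0 ≤ k ∧ M.entry k i j = false} := by
    apply natcard_split (P := fun k j => 0 ≤ k ∧ M.entry k i j = false)
    intro j
    apply Set.Finite.subset (Set.finite_Icc (0 : ℤ) N2)
    intro k hk
    simp only [Set.mem_setOf_eq] at hk
    simp only [Set.mem_Icc]
    refine ⟨hk.1, ?_⟩
    by_contra h
    rw [hN2 k (by omega) i j] at hk
    simp at hk
  have h2 : Nat.card {p : ℤ × Fin m // p.1 < 0 ∧ M.entry p.1 i p.2 = true}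
      = ∑ j, Nat.card {k : ℤ // k < 0 ∧ M.entry k i j = true} := by
    apply natcard_split (P := fun k j => k < 0 ∧ M.entry k i j = true)
    intro j
    apply Set.Finite.subset (Set.finite_Icc (-(N1 : ℤ)) 0)
    intro k hk
    simp only [Set.mem_setOf_eq] at hk
    simp only [Set.mem_Icc]
    refine ⟨?_, by omega⟩
    by_contra h
    rw [hN1 k (by omega) i j] at hk
    simp at hk
  rw [h1, h2]
  push_cast
  rw [← Finset.sum_sub_distrib]
  all_goals (apply Finset.sum_congr rfl; intro _ _; rfl)

lemma colCharge_eq {n m : ℕ} (M : GenMaya n m) (j : Fin m) :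
    M.colCharge j = ∑ i, chargeS (seqOf M i j).1 := by
  rw [GenMaya.colCharge]
  obtain ⟨N2, hN2⟩ := M.eventually_one
  obtain ⟨N1, hN1⟩ := M.eventually_zero
  have h1 : Nat.card {p : ℤ × Fin n // 0 ≤ p.1 ∧ M.entry p.1 p.2 j = false}
      = ∑ i, Nat.card {k : ℤ // 0 ≤ k ∧ M.entry k i j = false} := by
    apply natcard_split (P := fun k i => 0 ≤ k ∧ M.entry k i j = false)
    intro i
    apply Set.Finite.subset (Set.finite_Icc (0 : ℤ) N2)
    intro k hk
    simp only [Set.mem_setOf_eq] at hk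
    simp only [Set.mem_Icc]
    refine ⟨hk.1, ?_⟩
    by_contra h
    rw [hN2 k (by omega) i j] at hk
    simp at hk
  have h2 : Nat.card {p : ℤ × Fin n // p.1 < 0 ∧ M.entry p.1 p.2 j = true}
      = ∑ i, Nat.card {k : ℤ // k < 0 ∧ M.entry k i j = true} := by
    apply natcard_split (P := fun k i => k < 0 ∧ M.entry k i j = true)
    intro i
    apply Set.Finite.subset (Set.finite_Icc (-(N1 : ℤ)) 0)
    intro k hk
    simp only [Set.mem_setOf_eq] at hk
    simp only [Set.mem_Icc]
    refine ⟨?_, by omega⟩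
    by_contra h
    rw [hN1 k (by omega) i j] at hk
    simp at hk
  rw [h1, h2]
  push_cast
  rw [← Finset.sum_sub_distrib]
  all_goals (apply Finset.sum_congr rfl; intro _ _; rfl)

private lemma natcard_pair {n m : ℕ} (Q : Fin n → Fin m → Prop) [∀ i j, Decidable (Q i j)] :
    Nat.card {p : Fin n × Fin m // Q p.1 p.2}
      = ∑ i, ∑ j, (if Q i j then 1 else 0) := by
  classical
  rw [Nat.card_eq_fintype_card, Fintype.card_subtype, Finset.card_filter,
    Fintype.sum_prod_type]
  all_goals
    (apply Finset.sum_congr rfl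
     intro i _
     apply Finset.sum_congr rfl
     intro j _
     split_ifs <;> rfl)

lemma dParam_eq {n m : ℕ} (M : GenMaya n m) :
    M.dParam = ∑ i, ∑ j, dvalS (seqOf M i j).1 := by
  classical
  obtain ⟨N1, hN1⟩ := M.eventually_zero
  obtain ⟨N2, hN2⟩ := M.eventually_one
  have t1 : (∑' k : ℕ, (k + 1) *
        Nat.card {p : Fin n × Fin m // M.entry (-(k + 1 : ℕ) : ℤ) p.1 p.2 = true})
      = ∑ k ∈ Finset.range N1, (k + 1) *
          Nat.card {p : Fin n × Fin m // M.entry (-(k + 1 : ℕ) : ℤ) p.1 p.2 = true} := by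
    apply tsum_eq_sum
    intro k hk
    simp only [Finset.mem_range, not_lt] at hk
    have he : IsEmpty {p : Fin n × Fin m // M.entry (-(k + 1 : ℕ) : ℤ) p.1 p.2 = true} := by
      constructor
      rintro ⟨⟨i, j⟩, hp⟩
      rw [hN1 _ (by push_cast; omega) i j] at hp
      simp at hp
    rw [Nat.card_of_isEmpty, mul_zero]
  have t2 : (∑' k : ℕ, (k + 1) *
        Nat.card {p : Fin n × Fin m // M.entry ((k + 1 : ℕ) : ℤ) p.1 p.2 = false})
      = ∑ k ∈ Finset.range N2, (k + 1) *
          Nat.card {p : Fin n × Fin m // M.entry ((k + 1 : ℕ) : ℤ) p.1 p.2 = false} := by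
    apply tsum_eq_sum
    intro k hk
    simp only [Finset.mem_range, not_lt] at hk
    have he : IsEmpty {p : Fin n × Fin m // M.entry ((k + 1 : ℕ) : ℤ) p.1 p.2 = false} := by
      constructor
      rintro ⟨⟨i, j⟩, hp⟩
      rw [hN2 _ (by push_cast; omega) i j] at hp
      simp at hp
    rw [Nat.card_of_isEmpty, mul_zero]
  have s1 : ∀ (i : Fin n) (j : Fin m), dvalS (seqOf M i j).1
      = (∑ k ∈ Finset.range N1, (k + 1) * (if M.entry (-(k + 1 : ℕ) : ℤ) i j = true then 1 else 0))
      + (∑ k ∈ Finset.range N2, (k + 1) * (if M.entry ((k + 1 : ℕ) : ℤ) i j = false then 1 else 0)) := by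
    intro i j
    rw [dvalS]
    congr 1
    · apply tsum_eq_sum
      intro k hk
      simp only [Finset.mem_range, not_lt] at hk
      have : (seqOf M i j).1 (-(k + 1 : ℕ) : ℤ) = false := hN1 _ (by push_cast; omega) i j
      rw [this]
      simp
    · apply tsum_eq_sum
      intro k hk
      simp only [Finset.mem_range, not_lt] at hk
      have : (seqOf M i j).1 ((k + 1 : ℕ) : ℤ) = true := hN2 _ (by push_cast; omega) i j
      rw [this]
      simp
  rw [GenMaya.dParam, t1, t2]
  have e1 : ∑ k ∈ Finset.range N1, (k + 1) *
        Nat.card {p : Fin n × Fin m // M.entry (-(k + 1 : ℕ) : ℤ) p.1 p.2 = true}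
      = ∑ i, ∑ j, ∑ k ∈ Finset.range N1,
          (k + 1) * (if M.entry (-(k + 1 : ℕ) : ℤ) i j = true then 1 else 0) := by
    have h0 : ∑ k ∈ Finset.range N1, (k + 1) *
          Nat.card {p : Fin n × Fin m // M.entry (-(k + 1 : ℕ) : ℤ) p.1 p.2 = true}
        = ∑ k ∈ Finset.range N1, ∑ i, ∑ j,
            (k + 1) * (if M.entry (-(k + 1 : ℕ) : ℤ) i j = true then 1 else 0) := by
      apply Finset.sum_congr rfl
      intro k _
      rw [natcard_pair (fun a b => M.entry (-(k + 1 : ℕ) : ℤ) a b = true), Finset.mul_sum]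
      apply Finset.sum_congr rfl
      intro i _
      rw [Finset.mul_sum]
    rw [h0, Finset.sum_comm]
    apply Finset.sum_congr rfl
    intro i _
    rw [Finset.sum_comm]
  have e2 : ∑ k ∈ Finset.range N2, (k + 1) *
        Nat.card {p : Fin n × Fin m // M.entry ((k + 1 : ℕ) : ℤ) p.1 p.2 = false}
      = ∑ i, ∑ j, ∑ k ∈ Finset.range N2,
          (k + 1) * (if M.entry ((k + 1 : ℕ) : ℤ) i j = false then 1 else 0) := by
    have h0 : ∑ k ∈ Finset.range N2, (k + 1) *
          Nat.card {p : Fin n × Fin m // M.entry ((k + 1 : ℕ) : ℤ) p.1 p.2 = false}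
        = ∑ k ∈ Finset.range N2, ∑ i, ∑ j,
            (k + 1) * (if M.entry ((k + 1 : ℕ) : ℤ) i j = false then 1 else 0) := by
      apply Finset.sum_congr rfl
      intro k _
      rw [natcard_pair (fun a b => M.entry ((k + 1 : ℕ) : ℤ) a b = false), Finset.mul_sum]
      apply Finset.sum_congr rfl
      intro i _
      rw [Finset.mul_sum]
    rw [h0, Finset.sum_comm]
    apply Finset.sum_congr rfl
    intro i _
    rw [Finset.sum_comm]
  rw [e1, e2, ← Finset.sum_add_distrib]
  apply Finset.sum_congr rfl
  intro i _
  rw [← Finset.sum_add_distrib]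
  apply Finset.sum_congr rfl
  intro j _
  exact (s1 i j).symm

noncomputable def cellE : MSeq ≃ ℤ × PartitionSigma :=
  MSeq.ZA.trans (Equiv.prodCongr (Equiv.refl ℤ) AP)

lemma cellE_fst (s : MSeq) : (cellE s).1 = s.cOf := rfl

lemma cellE_charge (s : MSeq) : chargeS s.1 = (cellE s).1 := (MSeq.charge_fact s).1

lemma cellE_dval (s : MSeq) :
    (dvalS s.1 : ℤ) = (cellE s).1 * ((cellE s).1 - 1) / 2 + ((cellE s).2.1 : ℤ) := by
  have h1 := (MSeq.charge_fact s).2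
  have h2 : (cellE s).2 = AtoP ⟨s.lOf, s.lOf_antitone, ⟨s.NOf, s.lOf_zero⟩⟩ := rfl
  have h3 : ((cellE s).2).1 = ∑ i ∈ Finset.range s.NOf, s.lOf i := by
    rw [h2]
    exact AtoP_fst _ s.NOf s.lOf_zero
  rw [cellE_fst, h3, h1]
  push_cast
  ring

theorem stmt5' (n m : ℕ) (e : Fin n → ℤ) (f : Fin m → ℤ)
    (hef : ∑ i, e i = ∑ j, f j) :
    ∃ Φ : {M : GenMaya n m //
            (∀ i, M.rowCharge i = e i) ∧ (∀ j, M.colCharge j = f j)} ≃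
          ({c : Matrix (Fin n) (Fin m) ℤ //
              (∀ i, ∑ j, c i j = e i) ∧ (∀ j, ∑ i, c i j = f j)} ×
            (Fin n → Fin m → PartitionSigma)),
      ∀ M, ((M.1).dParam : ℤ) =
        (∑ i, ∑ j, ((Φ M).1 : Matrix (Fin n) (Fin m) ℤ) i j *
            (((Φ M).1 : Matrix (Fin n) (Fin m) ℤ) i j - 1) / 2) +
        ∑ i, ∑ j, (((Φ M).2 i j).1 : ℤ) := by
  classical
  set E : GenMaya n m ≃ (Fin n → Fin m → ℤ × PartitionSigma) :=
    (bigE n m).trans (Equiv.piCongrRight fun i => Equiv.piCongrRight fun j => cellE) with hE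
  have hEapp : ∀ (M : GenMaya n m) (i : Fin n) (j : Fin m),
      E M i j = cellE (seqOf M i j) := fun M i j => rfl
  have hrow : ∀ (M : GenMaya n m) (i : Fin n),
      M.rowCharge i = ∑ j, (E M i j).1 := by
    intro M i
    rw [rowCharge_eq]
    apply Finset.sum_congr rfl
    intro j _
    rw [cellE_charge, hEapp]
  have hcol : ∀ (M : GenMaya n m) (j : Fin m),
      M.colCharge j = ∑ i, (E M i j).1 := by
    intro M j
    rw [colCharge_eq]
    apply Finset.sum_congr rfl
    intro i _
    rw [cellE_charge, hEapp]
  set step1 : {M : GenMaya n m //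
      (∀ i, M.rowCharge i = e i) ∧ (∀ j, M.colCharge j = f j)} ≃
      {g : Fin n → Fin m → ℤ × PartitionSigma //
        (∀ i, ∑ j, (g i j).1 = e i) ∧ (∀ j, ∑ i, (g i j).1 = f j)} :=
    Equiv.subtypeEquiv E (by
      intro M
      constructor
      · rintro ⟨h1, h2⟩
        exact ⟨fun i => by rw [← hrow M i]; exact h1 i,
               fun j => by rw [← hcol M j]; exact h2 j⟩
      · rintro ⟨h1, h2⟩
        exact ⟨fun i => by rw [hrow M i]; exact h1 i,
               fun j => by rw [hcol M j]; exact h2 j⟩)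
  set step2 : {g : Fin n → Fin m → ℤ × PartitionSigma //
        (∀ i, ∑ j, (g i j).1 = e i) ∧ (∀ j, ∑ i, (g i j).1 = f j)} ≃
      ({c : Matrix (Fin n) (Fin m) ℤ //
          (∀ i, ∑ j, c i j = e i) ∧ (∀ j, ∑ i, c i j = f j)} ×
        (Fin n → Fin m → PartitionSigma)) :=
    { toFun := fun g => (⟨fun i j => (g.1 i j).1, g.2⟩, fun i j => (g.1 i j).2)
      invFun := fun p => ⟨fun i j => (p.1.1 i j, p.2 i j), p.1.2⟩
      left_inv := fun g => rfl
      right_inv := fun p => rfl }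
  refine ⟨step1.trans step2, ?_⟩
  rintro ⟨M, hM⟩
  have hd := dParam_eq M
  have hPhi1 : ∀ (i : Fin n) (j : Fin m),
      (((step1.trans step2) ⟨M, hM⟩).1 : Matrix (Fin n) (Fin m) ℤ) i j = (E M i j).1 := by
    intro i j
    rfl
  have hPhi2 : ∀ (i : Fin n) (j : Fin m),
      ((step1.trans step2) ⟨M, hM⟩).2 i j = (E M i j).2 := by
    intro i j
    rfl
  rw [hd]
  push_cast
  rw [← Finset.sum_add_distrib]
  apply Finset.sum_congr rfl
  intro i _
  rw [← Finset.sum_add_distrib]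
  apply Finset.sum_congr rfl
  intro j _
  rw [hPhi1, hPhi2, hEapp]
  exact cellE_dval (seqOf M i j)

/-- for margins `e, f` with `Σ e = Σ f`, there is a bijection between the
generalized Maya diagrams with margins `(e,f)` and pairs (contingency table `c` with
margins `(e,f)`, `n·m`-tuple of partitions), under which the parameter `d` of a Maya
diagram equals `Σ_{ij} c_{ij}(c_{ij}-1)/2 + Σ_{ij} |λ_{ij}|`. -/
theorem stmt5 (n m : ℕ) (e : Fin n → ℤ) (f : Fin m → ℤ)
    (hef : ∑ i, e i = ∑ j, f j) :
    ∃ Φ : {M : GenMaya n m //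
            (∀ i, M.rowCharge i = e i) ∧ (∀ j, M.colCharge j = f j)} ≃
          ({c : Matrix (Fin n) (Fin m) ℤ //
              (∀ i, ∑ j, c i j = e i) ∧ (∀ j, ∑ i, c i j = f j)} ×
            (Fin n → Fin m → PartitionSigma)),
      ∀ M, ((M.1).dParam : ℤ) =
        (∑ i, ∑ j, ((Φ M).1 : Matrix (Fin n) (Fin m) ℤ) i j *
            (((Φ M).1 : Matrix (Fin n) (Fin m) ℤ) i j - 1) / 2) +
        ∑ i, ∑ j, (((Φ M).2 i j).1 : ℤ) :=
  stmt5' n m e f hef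
end

section
/- A standard brane diagram triple (d,e,f) with e ∈ ℤⁿ, f ∈ ℤ^m is Hanany-Witten equivalent (via moves move-1 and move-2 and their inverses) to a co-balanced diagram if and only if e is an m-bounded non-decreasing sequence: e₁ ≤ e₂ ≤ … ≤ eₙ ≤ e₁ + m. Moreover, the property of being an m-bounded non-decreasing sequence is invariant under move-1 and move-2. -/
/-- The triple `(d, e, f)` encoding a standard brane diagram. -/
abbrev BraneTriple (n m : ℕ) := ℤ × (Fin n → ℤ) × (Fin m → ℤ)

/-- move-1: `(d,e,f) ↦ (d+e₁, (e₂,…,eₙ,e₁+m), (f₁+1,…,f_m+1))`. -/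
def move1 (n m : ℕ) (hn : 0 < n) (x : BraneTriple n m) : BraneTriple n m :=
  (x.1 + x.2.1 ⟨0, hn⟩,
   fun i => if h : (i : ℕ) + 1 < n then x.2.1 ⟨(i : ℕ) + 1, h⟩ else x.2.1 ⟨0, hn⟩ + m,
   fun j => x.2.2 j + 1)

/-- move-2: `(d,e,f) ↦ (d+f_m, (e₁+1,…,eₙ+1), (f_m+n, f₁,…,f_{m−1}))`. -/
def move2 (n m : ℕ) (hm : 0 < m) (x : BraneTriple n m) : BraneTriple n m :=
  (x.1 + x.2.2 ⟨m - 1, Nat.sub_lt hm Nat.one_pos⟩,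
   fun i => x.2.1 i + 1,
   fun j => if (j : ℕ) = 0 then x.2.2 ⟨m - 1, Nat.sub_lt hm Nat.one_pos⟩ + n
     else x.2.2 ⟨(j : ℕ) - 1, lt_of_le_of_lt (Nat.sub_le _ _) j.2⟩)

/-- Hanany-Witten equivalence of standard triples: generated by move-1, move-2
and their inverses. -/
def HWEquiv (n m : ℕ) (hn : 0 < n) (hm : 0 < m) :
    BraneTriple n m → BraneTriple n m → Prop :=
  Relation.ReflTransGen (fun x y =>
    y = move1 n m hn x ∨ y = move2 n m hm x ∨
    x = move1 n m hn y ∨ x = move2 n m hm y)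

/-- `e` is a non-decreasing sequence. -/
def NondecSeq (n : ℕ) (e : Fin n → ℤ) : Prop :=
  ∀ i : Fin n, ∀ h : (i : ℕ) + 1 < n, e i ≤ e ⟨(i : ℕ) + 1, h⟩

/-- `e` is an `m`-bounded non-decreasing sequence: `e₁ ≤ e₂ ≤ … ≤ eₙ ≤ e₁ + m`. -/
def MBounded (n m : ℕ) (hn : 0 < n) (e : Fin n → ℤ) : Prop :=
  NondecSeq n e ∧ e ⟨n - 1, Nat.sub_lt hn Nat.one_pos⟩ ≤ e ⟨0, hn⟩ + m

lemma ecast {n : ℕ} (e : Fin n → ℤ) {a b : ℕ} (ha : a < n) (hb : b < n) (h : a = b) :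
    e ⟨a, ha⟩ = e ⟨b, hb⟩ := by subst h; rfl

lemma nondec_iff (n : ℕ) (e : Fin n → ℤ) :
    NondecSeq n e ↔ ∀ (i : ℕ) (hi : i < n) (h : i + 1 < n), e ⟨i, hi⟩ ≤ e ⟨i + 1, h⟩ :=
  ⟨fun H i hi h => H ⟨i, hi⟩ h, fun H i h => H i.1 i.2 h⟩

lemma mb_shift (n m : ℕ) (hn : 0 < n) (e : Fin n → ℤ) :
    MBounded n m hn e ↔ MBounded n m hn
      (fun i : Fin n => if h : (i : ℕ) + 1 < n then e ⟨(i : ℕ) + 1, h⟩ else e ⟨0, hn⟩ + m) := by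
  set E : Fin n → ℤ :=
    fun i : Fin n => if h : (i : ℕ) + 1 < n then e ⟨(i : ℕ) + 1, h⟩ else e ⟨0, hn⟩ + m
    with hEdef
  have hE1 : ∀ (a : ℕ) (ha : a < n) (h : a + 1 < n), E ⟨a, ha⟩ = e ⟨a + 1, h⟩ :=
    fun a ha h => dif_pos h
  have hE2 : ∀ (a : ℕ) (ha : a < n), ¬(a + 1 < n) → E ⟨a, ha⟩ = e ⟨0, hn⟩ + m :=
    fun a ha h => dif_neg h
  constructor
  · rintro ⟨hnd, hb⟩
    replace hnd := (nondec_iff n e).1 hnd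
    constructor
    · rw [nondec_iff]
      intro i hi h
      rw [hE1 i hi h]
      by_cases h2 : i + 1 + 1 < n
      · rw [hE1 (i+1) h h2]
        exact hnd (i+1) h h2
      · rw [hE2 (i+1) h h2]
        have := ecast e h (Nat.sub_lt hn Nat.one_pos) (by omega)
        omega
    · rw [hE2 (n-1) (Nat.sub_lt hn Nat.one_pos) (by omega)]
      by_cases h1 : 0 + 1 < n
      · rw [hE1 0 hn h1]
        have := hnd 0 hn h1
        omega
      · rw [hE2 0 hn h1]
        omega
  · rintro ⟨hnd, hb⟩
    replace hnd := (nondec_iff n E).1 hnd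
    constructor
    · rw [nondec_iff]
      intro i hi h
      rcases Nat.eq_zero_or_pos i with rfl | hipos
      · rw [hE2 (n-1) (Nat.sub_lt hn Nat.one_pos) (by omega), hE1 0 hn h] at hb
        have := ecast e hi hn (rfl : (0:ℕ) = 0)
        omega
      · have q1 : i - 1 < n := by omega
        have q2 : i - 1 + 1 < n := by omega
        have q3 : i - 1 + 1 + 1 < n := by omega
        have key := hnd (i-1) q1 q2
        rw [hE1 (i-1) q1 q2, hE1 (i-1+1) q2 q3] at key
        have b1 := ecast e hi q2 (by omega)
        have b2 := ecast e h q3 (by omega)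
        omega
    · rcases Nat.lt_or_ge 1 n with h2 | h2
      · have q1 : n - 2 < n := by omega
        have q2 : n - 2 + 1 < n := by omega
        have key := hnd (n-2) q1 q2
        rw [hE1 (n-2) q1 q2, hE2 (n-2+1) q2 (by omega)] at key
        have b1 := ecast e (Nat.sub_lt hn Nat.one_pos) q2 (by omega)
        omega
      · have b1 := ecast e (Nat.sub_lt hn Nat.one_pos) hn (by omega)
        omega

lemma mb_add1 (n m : ℕ) (hn : 0 < n) (e : Fin n → ℤ) :
    MBounded n m hn e ↔ MBounded n m hn (fun i => e i + 1) := by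
  simp only [MBounded, NondecSeq]
  constructor
  · rintro ⟨hnd, hb⟩
    exact ⟨fun i h => by have := hnd i h; omega, by omega⟩
  · rintro ⟨hnd, hb⟩
    exact ⟨fun i h => by have := hnd i h; omega, by omega⟩

lemma mb_move1 (n m : ℕ) (hn : 0 < n) (x : BraneTriple n m) :
    MBounded n m hn x.2.1 ↔ MBounded n m hn (move1 n m hn x).2.1 :=
  mb_shift n m hn x.2.1

lemma mb_move2 (n m : ℕ) (hn : 0 < n) (hm : 0 < m) (x : BraneTriple n m) :
    MBounded n m hn x.2.1 ↔ MBounded n m hn (move2 n m hm x).2.1 :=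
  mb_add1 n m hn x.2.1

lemma hw_mb (n m : ℕ) (hn : 0 < n) (hm : 0 < m) (x y : BraneTriple n m)
    (h : HWEquiv n m hn hm x y) : (MBounded n m hn x.2.1 ↔ MBounded n m hn y.2.1) := by
  induction h with
  | refl => rfl
  | tail _ step ih =>
    rename_i b c _
    rcases step with rfl | rfl | h1 | h1
    · rw [ih]; exact mb_move1 n m hn b
    · rw [ih]; exact mb_move2 n m hn hm b
    · rw [ih, h1]; exact (mb_move1 n m hn c).symm
    · rw [ih, h1]; exact (mb_move2 n m hn hm c).symm

/-- shifting the e-component up by s via move2. -/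
lemma hw_up (n m : ℕ) (hn : 0 < n) (hm : 0 < m) (s : ℕ) (x : BraneTriple n m) :
    ∃ x' : BraneTriple n m, HWEquiv n m hn hm x x' ∧
      ∀ i, x'.2.1 i = x.2.1 i + s := by
  induction s with
  | zero => exact ⟨x, Relation.ReflTransGen.refl, fun i => by simp⟩
  | succ s ih =>
    obtain ⟨x', hw, he⟩ := ih
    refine ⟨move2 n m hm x', Relation.ReflTransGen.tail hw (Or.inr (Or.inl rfl)), fun i => ?_⟩
    show x'.2.1 i + 1 = _
    rw [he i]
    push_cast
    ring

/-- inverse-move2 predecessor. -/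
lemma move2_surj (n m : ℕ) (hm : 0 < m) (x : BraneTriple n m) :
    ∃ y : BraneTriple n m, move2 n m hm y = x ∧ ∀ i, y.2.1 i = x.2.1 i - 1 := by
  obtain ⟨d, e, f⟩ := x
  refine ⟨(d - (f ⟨0, hm⟩ - n), fun i => e i - 1,
    fun j => if h : (j : ℕ) + 1 < m then f ⟨(j : ℕ) + 1, h⟩ else f ⟨0, hm⟩ - n), ?_, fun i => rfl⟩
  unfold move2
  refine Prod.ext ?_ (Prod.ext ?_ ?_)
  · show d - (f ⟨0, hm⟩ - n) + (if h : (m - 1) + 1 < m then f ⟨(m-1)+1, h⟩ else f ⟨0, hm⟩ - n) = d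
    rw [dif_neg (by omega)]
    ring
  · funext i
    show e i - 1 + 1 = e i
    ring
  · funext j
    by_cases hj : (j : ℕ) = 0
    · show (if (j:ℕ) = 0 then (if h : (m-1)+1 < m then f ⟨(m-1)+1, h⟩ else f ⟨0, hm⟩ - (n:ℤ)) + (n:ℤ) else _) = f j
      rw [if_pos hj, dif_neg (show ¬ ((m-1)+1 < m) by omega)]
      have : f ⟨0, hm⟩ = f j := by
        congr 1
        exact Fin.ext hj.symm
      rw [← this]
      ring
    · show (if (j:ℕ) = 0 then _ else
          (if h : (j:ℕ)-1+1 < m then f ⟨(j:ℕ)-1+1, h⟩ else f ⟨0, hm⟩ - (n:ℤ))) = f j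
      rw [if_neg hj, dif_pos (show (j:ℕ) - 1 + 1 < m by omega)]
      congr 1
      exact Fin.ext (by simp; omega)

lemma hw_down (n m : ℕ) (hn : 0 < n) (hm : 0 < m) (s : ℕ) (x : BraneTriple n m) :
    ∃ x' : BraneTriple n m, HWEquiv n m hn hm x x' ∧
      ∀ i, x'.2.1 i = x.2.1 i - s := by
  induction s with
  | zero => exact ⟨x, Relation.ReflTransGen.refl, fun i => by simp⟩
  | succ s ih =>
    obtain ⟨x', hw, he⟩ := ih
    obtain ⟨y, hy, hye⟩ := move2_surj n m hm x'
    refine ⟨y, Relation.ReflTransGen.tail hw (Or.inr (Or.inr (Or.inr hy.symm))), fun i => ?_⟩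
    rw [hye i, he i]
    push_cast
    ring

lemma hw_shift (n m : ℕ) (hn : 0 < n) (hm : 0 < m) (t : ℤ) (x : BraneTriple n m) :
    ∃ x' : BraneTriple n m, HWEquiv n m hn hm x x' ∧
      ∀ i, x'.2.1 i = x.2.1 i + t := by
  rcases le_or_gt 0 t with h | h
  · obtain ⟨x', hw, he⟩ := hw_up n m hn hm t.toNat x
    exact ⟨x', hw, fun i => by rw [he i, Int.toNat_of_nonneg h]⟩
  · obtain ⟨x', hw, he⟩ := hw_down n m hn hm (-t).toNat x
    refine ⟨x', hw, fun i => by rw [he i, Int.toNat_of_nonneg (by omega)]; ring⟩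

lemma hw_rot (n m : ℕ) (hn : 0 < n) (hm : 0 < m) :
    ∀ (k : ℕ) (x : BraneTriple n m), MBounded n m hn x.2.1 →
    (x.2.1 ⟨n - 1, Nat.sub_lt hn Nat.one_pos⟩ < x.2.1 ⟨0, hn⟩ + m ∨
      ∃ (j : ℕ) (hj : j < n), j ≤ k ∧ x.2.1 ⟨0, hn⟩ < x.2.1 ⟨j, hj⟩) →
    ∃ x' : BraneTriple n m, HWEquiv n m hn hm x x' ∧ MBounded n m hn x'.2.1 ∧
      x'.2.1 ⟨n - 1, Nat.sub_lt hn Nat.one_pos⟩ < x'.2.1 ⟨0, hn⟩ + m := by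
  intro k
  induction k with
  | zero =>
    rintro x hmb (hs | ⟨j, hj, hjk, hlt⟩)
    · exact ⟨x, Relation.ReflTransGen.refl, hmb, hs⟩
    · interval_cases j
      exact absurd hlt (lt_irrefl _)
  | succ k ih =>
    rintro x hmb (hs | ⟨j, hj, hjk, hlt⟩)
    · exact ⟨x, Relation.ReflTransGen.refl, hmb, hs⟩
    · have hj1 : 1 ≤ j := by
        by_contra hc
        have : j = 0 := by omega
        subst this
        exact absurd (ecast x.2.1 hn hj rfl ▸ hlt) (lt_irrefl _)
      have hn2 : 2 ≤ n := by omega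
      have hn1 : 0 + 1 < n := by omega
      set y := move1 n m hn x with hy
      have hstep : HWEquiv n m hn hm x y :=
        Relation.ReflTransGen.single (Or.inl rfl)
      have hmby : MBounded n m hn y.2.1 := (mb_move1 n m hn x).1 hmb
      have hy0 : y.2.1 ⟨0, hn⟩ = x.2.1 ⟨0 + 1, hn1⟩ := dif_pos (show 0 + 1 < n from hn1)
      have hylast : y.2.1 ⟨n - 1, Nat.sub_lt hn Nat.one_pos⟩ = x.2.1 ⟨0, hn⟩ + m :=
        dif_neg (show ¬ (n - 1 + 1 < n) by omega)
      rcases lt_or_ge (x.2.1 ⟨0, hn⟩) (x.2.1 ⟨0 + 1, hn1⟩) with h01 | h01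
      · obtain ⟨x', hw, hmb', hs'⟩ := ih y hmby (Or.inl (by rw [hy0, hylast]; omega))
        exact ⟨x', Relation.ReflTransGen.trans hstep hw, hmb', hs'⟩
      · have heq : x.2.1 ⟨0 + 1, hn1⟩ = x.2.1 ⟨0, hn⟩ := by
          have := (nondec_iff n x.2.1).1 hmb.1 0 hn hn1
          omega
        have hj2 : 2 ≤ j := by
          rcases Nat.lt_or_ge j 2 with hc | hc
          · have : j = 1 := by omega
            subst this
            have := ecast x.2.1 hj hn1 (by omega)
            omega
          · exact hc
        have hjn' : j - 1 < n := by omega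
        have hjn2 : j - 1 + 1 < n := by omega
        have hyj : y.2.1 ⟨j - 1, hjn'⟩ = x.2.1 ⟨j - 1 + 1, hjn2⟩ :=
          dif_pos (show j - 1 + 1 < n from hjn2)
        have hbridge := ecast x.2.1 hj hjn2 (by omega)
        have hwit : y.2.1 ⟨0, hn⟩ < y.2.1 ⟨j - 1, hjn'⟩ := by
          rw [hy0, hyj, heq]
          omega
        obtain ⟨x', hw, hmb', hs'⟩ := ih y hmby (Or.inr ⟨j - 1, hjn', by omega, hwit⟩)
        exact ⟨x', Relation.ReflTransGen.trans hstep hw, hmb', hs'⟩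

/-- a standard brane triple `(d,e,f)` is Hanany-Witten equivalent to a
co-balanced diagram — equivalently (by Theorem `wittentheorem`(2),(3) of the paper),
HW-equivalent to a standard triple `(d',e',f')` whose charges satisfy
`−m < e'₁ ≤ … ≤ e'ₙ ≤ 0`, from which a co-balanced diagram (a quiver) is directly
obtained — if and only if `e` is an `m`-bounded non-decreasing sequence.
Moreover, being an `m`-bounded non-decreasing sequence is invariant under move-1,
move-2 and their inverses. -/
theorem stmt9 (n m : ℕ) (hn : 0 < n) (hm : 0 < m)
    (d : ℤ) (e : Fin n → ℤ) (f : Fin m → ℤ) :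
    ((∃ x' : BraneTriple n m, HWEquiv n m hn hm (d, e, f) x' ∧
        NondecSeq n x'.2.1 ∧ -(m : ℤ) < x'.2.1 ⟨0, hn⟩ ∧
        x'.2.1 ⟨n - 1, Nat.sub_lt hn Nat.one_pos⟩ ≤ 0) ↔
      MBounded n m hn e) ∧
    (∀ x : BraneTriple n m,
      (MBounded n m hn x.2.1 ↔ MBounded n m hn (move1 n m hn x).2.1) ∧
      (MBounded n m hn x.2.1 ↔ MBounded n m hn (move2 n m hm x).2.1)) := by
  constructor
  · constructor
    · rintro ⟨x', hw, hnd, h0, hl⟩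
      have hmb' : MBounded n m hn x'.2.1 := ⟨hnd, by omega⟩
      exact (hw_mb n m hn hm (d, e, f) x' hw).2 hmb'
    · intro hmb
      have hx : ((d, e, f) : BraneTriple n m).2.1 = e := rfl
      have hdisj : ((d, e, f) : BraneTriple n m).2.1 ⟨n - 1, Nat.sub_lt hn Nat.one_pos⟩ <
            ((d, e, f) : BraneTriple n m).2.1 ⟨0, hn⟩ + m ∨
          ∃ (j : ℕ) (hj : j < n), j ≤ n ∧
            ((d, e, f) : BraneTriple n m).2.1 ⟨0, hn⟩ <
              ((d, e, f) : BraneTriple n m).2.1 ⟨j, hj⟩ := by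
        rw [hx]
        rcases lt_or_ge (e ⟨n - 1, Nat.sub_lt hn Nat.one_pos⟩) (e ⟨0, hn⟩ + m) with hs | hs
        · exact Or.inl hs
        · refine Or.inr ⟨n - 1, Nat.sub_lt hn Nat.one_pos, by omega, ?_⟩
          have := hmb.2
          omega
      obtain ⟨x₁, hw₁, hmb₁, hs₁⟩ := hw_rot n m hn hm n (d, e, f) hmb hdisj
      obtain ⟨x₂, hw₂, he₂⟩ :=
        hw_shift n m hn hm (-(x₁.2.1 ⟨n - 1, Nat.sub_lt hn Nat.one_pos⟩)) x₁
      refine ⟨x₂, Relation.ReflTransGen.trans hw₁ hw₂, ?_, ?_, ?_⟩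
      · intro i h
        rw [he₂ i, he₂ ⟨(i : ℕ) + 1, h⟩]
        have := hmb₁.1 i h
        omega
      · rw [he₂]
        omega
      · rw [he₂]
        have := hmb₁.2
        omega
  · intro x
    exact ⟨mb_move1 n m hn x, mb_move2 n m hn hm x⟩
end

section
/- A vector e ∈ ℤⁿ is move-1-equivalent to an (m+1)-bounded non-decreasing sequence if and only if, setting δᵢ = e_{i+1} − eᵢ for 1 ≤ i ≤ n−1 and δₙ = (e₁ + m) − eₙ, there exists j ∈ {1,…,n} such that δⱼ ≥ −1 and δᵢ ≥ 0 for all i ≠ j. -/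
/-- move-1 on charge vectors: `e ↦ (e₂, e₃, …, eₙ, e₁ + m)`. -/
def move1e (n m : ℕ) (hn : 0 < n) (e : Fin n → ℤ) : Fin n → ℤ :=
  fun i => if h : (i : ℕ) + 1 < n then e ⟨(i : ℕ) + 1, h⟩ else e ⟨0, hn⟩ + m

/-- Equivalence generated by `move1e` and its inverse. -/
def Move1eEquiv (n m : ℕ) (hn : 0 < n) : (Fin n → ℤ) → (Fin n → ℤ) → Prop :=
  Relation.ReflTransGen (fun e e' => e' = move1e n m hn e ∨ e = move1e n m hn e')

/-- The cyclic difference vector: `δᵢ = e_{i+1} − eᵢ` for `i < n` and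
`δₙ = (e₁ + m) − eₙ`. -/
def cyclicDelta (n m : ℕ) (hn : 0 < n) (e : Fin n → ℤ) : Fin n → ℤ :=
  fun i => (if h : (i : ℕ) + 1 < n then e ⟨(i : ℕ) + 1, h⟩ else e ⟨0, hn⟩ + m) - e i

open Fin.NatCast

lemma delta_move1e (n m : ℕ) (hn : 0 < n) (e : Fin n → ℤ) (i : Fin n) :
    haveI : NeZero n := ⟨hn.ne'⟩
    cyclicDelta n m hn (move1e n m hn e) i = cyclicDelta n m hn e (i + 1) := by
  haveI : NeZero n := ⟨hn.ne'⟩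
  have hadd : ((i + 1 : Fin n) : ℕ) = ((i : ℕ) + 1 % n) % n := rfl
  by_cases h1 : (i : ℕ) + 1 < n
  · have hn2 : 2 ≤ n := by omega
    have h1n : 1 % n = 1 := Nat.mod_eq_of_lt hn2
    have hv1 : ((i + 1 : Fin n) : ℕ) = (i : ℕ) + 1 := by
      rw [hadd, h1n, Nat.mod_eq_of_lt h1]
    have heq : (i + 1 : Fin n) = ⟨(i : ℕ) + 1, h1⟩ := Fin.ext hv1
    by_cases h2 : (i : ℕ) + 2 < n
    · simp only [cyclicDelta, move1e, hv1, heq, dif_pos h1,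
        dif_pos (show (i:ℕ)+1+1 < n by omega)]
    · simp only [cyclicDelta, move1e, hv1, heq, dif_pos h1,
        dif_neg (show ¬((i:ℕ)+1+1 < n) by omega)]
  · have hvi : (i : ℕ) = n - 1 := by omega
    have hv0 : ((i + 1 : Fin n) : ℕ) = 0 := by
      rcases Nat.lt_or_ge 1 n with h | h
      · rw [hadd, Nat.mod_eq_of_lt h, hvi, Nat.sub_add_cancel hn, Nat.mod_self]
      · interval_cases n
        rw [hadd]
        omega
    have h01 : (⟨0, hn⟩ : Fin n) = i + 1 := by apply Fin.ext; simp [hv0]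
    simp only [cyclicDelta, move1e, dif_neg h1, hv0, h01]
    ring

/-- The "good difference" predicate. -/
def goodP (n m : ℕ) (hn : 0 < n) (e : Fin n → ℤ) : Prop :=
  ∃ j : Fin n, -1 ≤ cyclicDelta n m hn e j ∧
    ∀ i : Fin n, i ≠ j → 0 ≤ cyclicDelta n m hn e i

lemma goodP_move1e (n m : ℕ) (hn : 0 < n) (e : Fin n → ℤ) :
    goodP n m hn (move1e n m hn e) ↔ goodP n m hn e := by
  haveI : NeZero n := ⟨hn.ne'⟩
  constructor
  · rintro ⟨j, h1, h2⟩
    rw [delta_move1e] at h1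
    refine ⟨j + 1, h1, fun i hi => ?_⟩
    have := h2 (i - 1) (fun h => hi (by rw [← h, sub_add_cancel]))
    rwa [delta_move1e, sub_add_cancel] at this
  · rintro ⟨j, h1, h2⟩
    refine ⟨j - 1, ?_, fun i hi => ?_⟩
    · rw [delta_move1e, sub_add_cancel]; exact h1
    · rw [delta_move1e]
      exact h2 (i + 1) (fun h => hi (by rw [← h, add_sub_cancel_right]))

lemma goodP_equiv (n m : ℕ) (hn : 0 < n) (a b : Fin n → ℤ)
    (h : Move1eEquiv n m hn a b) : goodP n m hn a ↔ goodP n m hn b := by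
  induction h with
  | refl => rfl
  | tail _ step ih =>
    rename_i b' c _
    rcases step with h | h
    · rw [ih, h, goodP_move1e]
    · rw [ih, h, goodP_move1e]

lemma delta_iterate (n m : ℕ) (hn : 0 < n) (e : Fin n → ℤ) (k : ℕ) (i : Fin n) :
    haveI : NeZero n := ⟨hn.ne'⟩
    cyclicDelta n m hn ((move1e n m hn)^[k] e) i = cyclicDelta n m hn e (i + (k : Fin n)) := by
  haveI : NeZero n := ⟨hn.ne'⟩
  induction k generalizing i with
  | zero => simp
  | succ k ih =>
    rw [Function.iterate_succ_apply', delta_move1e, ih]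
    congr 1
    push_cast
    abel

lemma equiv_iterate (n m : ℕ) (hn : 0 < n) (e : Fin n → ℤ) (k : ℕ) :
    Move1eEquiv n m hn e ((move1e n m hn)^[k] e) := by
  induction k with
  | zero => exact Relation.ReflTransGen.refl
  | succ k ih =>
    exact ih.tail (Or.inl (Function.iterate_succ_apply' _ _ _))

/-- `e ∈ ℤⁿ` is move-1-equivalent to an `(m+1)`-bounded non-decreasing
sequence (`e'₁ ≤ … ≤ e'ₙ ≤ e'₁ + m + 1`) if and only if there exists
`j ∈ {1,…,n}` with `δⱼ ≥ −1` and `δᵢ ≥ 0` for all `i ≠ j`. -/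
theorem stmt11 (n m : ℕ) (hn : 0 < n) (e : Fin n → ℤ) :
    (∃ e' : Fin n → ℤ, Move1eEquiv n m hn e e' ∧
        (∀ i : Fin n, ∀ h : (i : ℕ) + 1 < n, e' i ≤ e' ⟨(i : ℕ) + 1, h⟩) ∧
        e' ⟨n - 1, Nat.sub_lt hn Nat.one_pos⟩ ≤ e' ⟨0, hn⟩ + m + 1) ↔
      (∃ j : Fin n, -1 ≤ cyclicDelta n m hn e j ∧
        ∀ i : Fin n, i ≠ j → 0 ≤ cyclicDelta n m hn e i) := by
  haveI : NeZero n := ⟨hn.ne'⟩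
  constructor
  · rintro ⟨e', hequiv, hmono, hbd⟩
    rw [show (∃ j : Fin n, -1 ≤ cyclicDelta n m hn e j ∧
        ∀ i : Fin n, i ≠ j → 0 ≤ cyclicDelta n m hn e i) = goodP n m hn e from rfl,
      goodP_equiv n m hn e e' hequiv]
    refine ⟨⟨n - 1, Nat.sub_lt hn Nat.one_pos⟩, ?_, fun i hi => ?_⟩
    · have hno : ¬ ((n - 1 : ℕ) + 1 < n) := by omega
      simp only [cyclicDelta, dif_neg hno]
      linarith
    · have hlt : (i : ℕ) + 1 < n := by
        have : (i : ℕ) ≠ n - 1 := fun h => hi (Fin.ext h)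
        omega
      simp only [cyclicDelta, dif_pos hlt]
      have := hmono i hlt
      linarith
  · rintro ⟨j, hj1, hj2⟩
    set e' := (move1e n m hn)^[(j : ℕ) + 1] e with he'
    have hlast : (⟨n - 1, Nat.sub_lt hn Nat.one_pos⟩ : Fin n) = ((n - 1 : ℕ) : Fin n) :=
      Fin.ext (by rw [Fin.val_natCast, Nat.mod_eq_of_lt (Nat.sub_lt hn Nat.one_pos)])
    have hkey : (⟨n - 1, Nat.sub_lt hn Nat.one_pos⟩ : Fin n) + (((j : ℕ) + 1 : ℕ) : Fin n) = j := by
      rw [hlast, ← Nat.cast_add, show (n - 1) + ((j : ℕ) + 1) = n + (j : ℕ) by omega,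
        Nat.cast_add, Fin.natCast_self, zero_add, Fin.cast_val_eq_self]
    refine ⟨e', equiv_iterate n m hn e _, fun i hlt => ?_, ?_⟩
    · have hne : i + (((j : ℕ) + 1 : ℕ) : Fin n) ≠ j := by
        intro h
        have h' : i + (((j : ℕ) + 1 : ℕ) : Fin n)
            = (⟨n - 1, Nat.sub_lt hn Nat.one_pos⟩ : Fin n) + (((j : ℕ) + 1 : ℕ) : Fin n) := by
          rw [h, hkey]
        have : i = (⟨n - 1, Nat.sub_lt hn Nat.one_pos⟩ : Fin n) := add_right_cancel h'
        rw [Fin.ext_iff] at this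
        simp at this
        omega
      have h0 := hj2 _ hne
      rw [← delta_iterate n m hn e ((j : ℕ) + 1) i] at h0
      simp only [cyclicDelta, dif_pos hlt, ← he'] at h0
      linarith
    · have h1 : -1 ≤ cyclicDelta n m hn e' ⟨n - 1, Nat.sub_lt hn Nat.one_pos⟩ := by
        rw [he', delta_iterate, hkey]; exact hj1
      have hno : ¬ ((n - 1 : ℕ) + 1 < n) := by omega
      simp only [cyclicDelta, dif_neg hno] at h1
      linarith
end

section
/- Let Z₀_{e,f}(q) = Σ_c q^{Σ_{i,j} c_{ij}(c_{ij}−1)/2}, the sum over integer contingency tables c with margins (e,f). Applying move-1 to (d,e,f): the map sending a table c with margins (e,f) to the table c' obtained by cyclically moving row 1 to the bottom and adding 1 to each of its entries is a bijection onto tables with margins ((e₂,…,eₙ,e₁+m),(f₁+1,…,f_m+1)), and Σ c'_{ij}(c'_{ij}−1)/2 = Σ c_{ij}(c_{ij}−1)/2 + e₁. -/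
def move1Table (n m : ℕ) (hn : 0 < n) (c : Matrix (Fin n) (Fin m) ℤ) :
    Matrix (Fin n) (Fin m) ℤ :=
  fun i j => if h : (i : ℕ) + 1 < n then c ⟨(i : ℕ) + 1, h⟩ j else c ⟨0, hn⟩ j + 1

private lemma tri_succ (a : ℤ) : (a + 1) * (a + 1 - 1) / 2 = a * (a - 1) / 2 + a := by
  have h : (a + 1) * (a + 1 - 1) = a * (a - 1) + a * 2 := by ring
  rw [h, Int.add_mul_ediv_right _ _ two_ne_zero]

/-- the map sending a contingency table `c` with margins `(e,f)` to the
table obtained by cyclically moving row 1 to the bottom and adding 1 to each of its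
entries is a bijection onto the tables with margins
`((e₂,…,eₙ,e₁+m), (f₁+1,…,f_m+1))`, and it shifts the exponent by `e₁`:
`Σ c'_{ij}(c'_{ij}−1)/2 = Σ c_{ij}(c_{ij}−1)/2 + e₁`. -/
theorem stmt13 (n m : ℕ) (hn : 0 < n) (e : Fin n → ℤ) (f : Fin m → ℤ) :
    Set.BijOn (move1Table n m hn)
      {c : Matrix (Fin n) (Fin m) ℤ |
        (∀ i, ∑ j, c i j = e i) ∧ (∀ j, ∑ i, c i j = f j)}
      {c : Matrix (Fin n) (Fin m) ℤ |
        (∀ i, ∑ j, c i j =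
          (if h : (i : ℕ) + 1 < n then e ⟨(i : ℕ) + 1, h⟩ else e ⟨0, hn⟩ + m)) ∧
        (∀ j, ∑ i, c i j = f j + 1)} ∧
    ∀ c : Matrix (Fin n) (Fin m) ℤ,
      (∀ i, ∑ j, c i j = e i) → (∀ j, ∑ i, c i j = f j) →
      (∑ i, ∑ j, move1Table n m hn c i j * (move1Table n m hn c i j - 1) / 2) =
        (∑ i, ∑ j, c i j * (c i j - 1) / 2) + e ⟨0, hn⟩ := by
  obtain ⟨k, rfl⟩ : ∃ k, n = k + 1 := ⟨n - 1, by omega⟩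
  have h0 : (⟨0, hn⟩ : Fin (k + 1)) = 0 := by ext; simp
  set F := move1Table (k + 1) m hn with hF
  have hFcast : ∀ (c : Matrix (Fin (k+1)) (Fin m) ℤ) (i : Fin k) (j : Fin m),
      F c i.castSucc j = c i.succ j := by
    intro c i j
    have h : (i.castSucc : ℕ) + 1 < k + 1 := by
      simp only [Fin.coe_castSucc]; omega
    simp only [hF, move1Table, dif_pos h]
    rfl
  have hFlast : ∀ (c : Matrix (Fin (k+1)) (Fin m) ℤ) (j : Fin m),
      F c (Fin.last k) j = c 0 j + 1 := by
    intro c j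
    have h : ¬ ((Fin.last k : Fin (k+1)) : ℕ) + 1 < k + 1 := by
      simp [Fin.last]
    simp only [hF, move1Table, dif_neg h, h0]
  -- the inverse map
  set G : Matrix (Fin (k+1)) (Fin m) ℤ → Matrix (Fin (k+1)) (Fin m) ℤ :=
    fun c i j => if h : (i : ℕ) = 0 then c (Fin.last k) j - 1
      else c ⟨(i : ℕ) - 1, by omega⟩ j with hG
  have hGF : ∀ c, G (F c) = c := by
    intro c
    funext i j
    rcases Nat.eq_zero_or_pos (i : ℕ) with h | h
    · have hi : i = 0 := by ext; simp [h]
      have h1 : (((0 : Fin (k+1))) : ℕ) = 0 := rfl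
      rw [hi]
      simp only [hG, dif_pos h1, hFlast]
      ring
    · have h' : ¬ ((i : ℕ) = 0) := by omega
      have hlt : ((i : ℕ) - 1) + 1 < k + 1 := by omega
      simp only [hG, dif_neg h', hF, move1Table, dif_pos hlt]
      congr 1
      ext
      simp
      omega
  have hFG : ∀ c, F (G c) = c := by
    intro c
    funext i j
    by_cases h : (i : ℕ) + 1 < k + 1
    · have h1 : ((⟨(i : ℕ) + 1, h⟩ : Fin (k+1)) : ℕ) ≠ 0 := by simp
      simp only [hF, move1Table, dif_pos h, hG, dif_neg h1]
      exact congrFun (congrArg c (Fin.ext (by simp))) j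
    · have hi : i = Fin.last k := by
        ext; simp [Fin.last]; omega
      have h1 : (((0 : Fin (k+1))) : ℕ) = 0 := rfl
      rw [hi, hFlast]
      simp only [hG, dif_pos h1]
      ring
  -- row sums of F c
  have hrow : ∀ (c : Matrix (Fin (k+1)) (Fin m) ℤ), (∀ i, ∑ j, c i j = e i) →
      ∀ i : Fin (k+1), ∑ j, F c i j =
        (if h : (i : ℕ) + 1 < k + 1 then e ⟨(i : ℕ) + 1, h⟩ else e ⟨0, hn⟩ + m) := by
    intro c hc i
    by_cases h : (i : ℕ) + 1 < k + 1
    · simp only [hF, move1Table, dif_pos h]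
      exact hc _
    · simp only [hF, move1Table, dif_neg h, Finset.sum_add_distrib,
        Finset.sum_const, Finset.card_univ, Fintype.card_fin, nsmul_eq_mul, mul_one]
      rw [hc]
  -- column sums of F c
  have hcol : ∀ (c : Matrix (Fin (k+1)) (Fin m) ℤ), (∀ j, ∑ i, c i j = f j) →
      ∀ j : Fin m, ∑ i, F c i j = f j + 1 := by
    intro c hc j
    rw [Fin.sum_univ_castSucc]
    simp only [hFcast, hFlast]
    have h2 : ∑ i : Fin (k+1), c i j = c 0 j + ∑ i : Fin k, c i.succ j :=
      Fin.sum_univ_succ _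
    have := hc j
    rw [h2] at this
    omega
  refine ⟨?_, ?_⟩
  · apply Set.InvOn.bijOn (f' := G)
    · exact ⟨fun c _ => hGF c, fun c _ => hFG c⟩
    · rintro c ⟨hce, hcf⟩
      exact ⟨hrow c hce, hcol c hcf⟩
    · rintro c ⟨hce, hcf⟩
      constructor
      · intro i
        rcases Nat.eq_zero_or_pos (i : ℕ) with h | h
        · have hi : i = 0 := by ext; simp [h]
          have hlast : ¬ ((Fin.last k : Fin (k+1)) : ℕ) + 1 < k + 1 := by
            simp [Fin.last]
          have := hce (Fin.last k)
          rw [dif_neg hlast] at this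
          have h1 : (((0 : Fin (k+1))) : ℕ) = 0 := rfl
          rw [hi]
          have hsum : ∑ j, G c 0 j = ∑ j, (c (Fin.last k) j - 1) :=
            Finset.sum_congr rfl fun j _ => by simp only [hG, dif_pos h1]
          rw [hsum, Finset.sum_sub_distrib, this, h0]
          simp
        · have h' : ¬ ((i : ℕ) = 0) := by omega
          have hlt : ((i : ℕ) - 1) + 1 < k + 1 := by omega
          have := hce ⟨(i : ℕ) - 1, by omega⟩
          rw [dif_pos hlt] at this
          simp only [hG, dif_neg h', this]
          congr 1
          ext
          simp
          omega
      · intro j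
        have hGzero : ∀ j, G c 0 j = c (Fin.last k) j - 1 := fun j => by simp [hG]
        have hGsucc : ∀ (i : Fin k) (j : Fin m), G c i.succ j = c i.castSucc j := by
          intro i j
          have h1 : ((i.succ : Fin (k+1)) : ℕ) ≠ 0 := by simp
          simp only [hG, dif_neg h1]
          exact congrFun (congrArg c (Fin.ext (by simp))) j
        have h2 : ∑ i, G c i j = (c (Fin.last k) j - 1) + ∑ i : Fin k, c i.castSucc j := by
          rw [Fin.sum_univ_succ (f := fun i => G c i j)]
          simp only [hGzero, hGsucc]
        have h3 : ∑ i : Fin (k+1), c i j = (∑ i : Fin k, c i.castSucc j) + c (Fin.last k) j :=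
          Fin.sum_univ_castSucc _
        have := hcf j
        rw [h3] at this
        rw [h2]
        omega
  · intro c hce _
    rw [Fin.sum_univ_castSucc (f := fun i => ∑ j, F c i j * (F c i j - 1) / 2)]
    rw [Fin.sum_univ_succ (f := fun i => ∑ j, c i j * (c i j - 1) / 2)]
    simp only [hFcast, hFlast]
    have hlastrow : ∑ j, (c 0 j + 1) * (c 0 j + 1 - 1) / 2 =
        (∑ j, c 0 j * (c 0 j - 1) / 2) + e ⟨0, hn⟩ := by
      rw [← hce ⟨0, hn⟩, h0, ← Finset.sum_add_distrib]
      exact Finset.sum_congr rfl fun j _ => tri_succ _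
    rw [hlastrow]
    ring
end

section
/- For m = 1 and e ∈ ℤⁿ, the refined generating series of the BB (−)-cells satisfies Z⁻(q,t) = q^A · t^{2B} · Π_{i=1}^{n} Π_{l≥1} (1 − t^{2(nl−i)} q^l)^{−1}, where A = Σ_{α=1}^{n} e_α(e_α−1)/2 and B = Σ_{1≤α<β≤n} C(|e_β − e_α − 1|, 2). -/
namespace Stmt14Aux

lemma card_transpose (μ : YoungDiagram) : μ.transpose.cells.card = μ.cells.card := by
  simp [YoungDiagram.transpose]

lemma sum_rowLens (μ : YoungDiagram) : μ.rowLens.sum = μ.cells.card := by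
  have hcells : μ.cells = (Finset.range (μ.colLen 0)).biUnion (fun i => μ.row i) := by
    ext ⟨i, j⟩
    simp only [Finset.mem_biUnion, Finset.mem_range]
    constructor
    · intro h
      refine ⟨i, ?_, by simp [YoungDiagram.mem_row_iff, (YoungDiagram.mem_cells _).mp h]⟩
      rw [← YoungDiagram.mem_iff_lt_colLen]
      exact μ.up_left_mem le_rfl (Nat.zero_le _) ((YoungDiagram.mem_cells _).mp h)
    · rintro ⟨a, _, hmem⟩
      rw [YoungDiagram.mem_row_iff] at hmem
      exact (YoungDiagram.mem_cells _).mpr hmem.1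
  have hdisj : ∀ x ∈ Finset.range (μ.colLen 0), ∀ y ∈ Finset.range (μ.colLen 0), x ≠ y →
      Disjoint (μ.row x) (μ.row y) := by
    intro x _ y _ hxy
    refine Finset.disjoint_left.mpr ?_
    intro c hc hc'
    rw [YoungDiagram.mem_row_iff] at hc hc'
    exact hxy (hc.2 ▸ hc'.2 ▸ rfl)
  rw [hcells, Finset.card_biUnion hdisj]
  rw [YoungDiagram.rowLens]
  rw [← Multiset.sum_coe]
  have : ((List.map μ.rowLen (List.range (μ.colLen 0)) : List ℕ) : Multiset ℕ)
      = (Finset.range (μ.colLen 0)).val.map μ.rowLen := by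
    simp [Finset.range]
    rfl
  rw [this]
  show ∑ i ∈ Finset.range (μ.colLen 0), μ.rowLen i = _
  exact Finset.sum_congr rfl fun i _ => μ.rowLen_eq_card

end Stmt14Aux

namespace Stmt14Aux

variable {k : ℕ}

/-- The Young diagram of a partition. -/
def toYD (p : Nat.Partition k) : YoungDiagram :=
  YoungDiagram.ofRowLens (p.parts.sort (· ≥ ·)) (p.parts.pairwise_sort _).sortedGE

lemma rowLens_toYD (p : Nat.Partition k) : (toYD p).rowLens = p.parts.sort (· ≥ ·) :=
  YoungDiagram.rowLens_ofRowLens_eq_self fun x hx =>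
    p.parts_pos ((p.parts.mem_sort _).mp hx)

lemma coe_rowLens_toYD (p : Nat.Partition k) : ((toYD p).rowLens : Multiset ℕ) = p.parts := by
  rw [rowLens_toYD, Multiset.sort_eq]

lemma card_toYD (p : Nat.Partition k) : (toYD p).cells.card = k := by
  rw [← sum_rowLens]
  have := congrArg Multiset.sum (coe_rowLens_toYD p)
  rw [Multiset.sum_coe] at this
  rw [this, p.parts_sum]

/-- Conjugate (transpose) of a partition. -/
def conjP (p : Nat.Partition k) : Nat.Partition k where
  parts := ((toYD p).transpose.rowLens : Multiset ℕ)
  parts_pos := fun hx => YoungDiagram.pos_of_mem_rowLens _ _ (by simpa using hx)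
  parts_sum := by
    rw [Multiset.sum_coe, sum_rowLens, card_transpose, card_toYD]

lemma ofRowLens_congr {w w' : List ℕ} (h : w = w') (hw : w.SortedGE)
    (hw' : w'.SortedGE) : YoungDiagram.ofRowLens w hw = YoungDiagram.ofRowLens w' hw' := by
  subst h; rfl

lemma toYD_conjP (p : Nat.Partition k) : toYD (conjP p) = (toYD p).transpose := by
  have hsorted := YoungDiagram.rowLens_sorted (toYD p).transpose
  have hsort : ((((toYD p).transpose.rowLens : Multiset ℕ)).sort (· ≥ ·))
      = (toYD p).transpose.rowLens := by
    apply List.Perm.eq_of_pairwise' (Multiset.pairwise_sort _ _) hsorted.pairwise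
    rw [← Multiset.coe_eq_coe, Multiset.sort_eq]
  calc toYD (conjP p) = YoungDiagram.ofRowLens _ (YoungDiagram.rowLens_sorted (toYD p).transpose) :=
        ofRowLens_congr hsort _ _
    _ = (toYD p).transpose := YoungDiagram.ofRowLens_to_rowLens_eq_self

lemma conjP_conjP (p : Nat.Partition k) : conjP (conjP p) = p := by
  ext1
  show (((toYD (conjP p)).transpose.rowLens : List ℕ) : Multiset ℕ) = p.parts
  rw [toYD_conjP, YoungDiagram.transpose_transpose, coe_rowLens_toYD]

lemma sup_coe_rowLens_transpose (μ : YoungDiagram) :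
    ((μ.transpose.rowLens : Multiset ℕ)).sup = μ.colLen 0 := by
  apply le_antisymm
  · apply Multiset.sup_le.mpr
    intro b hb
    rw [Multiset.mem_coe, List.mem_iff_get] at hb
    obtain ⟨i, rfl⟩ := hb
    rw [List.get_eq_getElem, YoungDiagram.get_rowLens, YoungDiagram.rowLen_transpose]
    exact μ.colLen_anti 0 _ (Nat.zero_le _)
  · by_cases h : 0 < μ.colLen 0
    · apply Multiset.le_sup
      rw [Multiset.mem_coe]
      have hlen : 0 < μ.transpose.rowLens.length := by
        rw [YoungDiagram.length_rowLens, YoungDiagram.colLen_transpose]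
        rw [← YoungDiagram.mem_iff_lt_rowLen]
        rw [← YoungDiagram.mem_iff_lt_colLen] at h
        exact h
      have : μ.transpose.rowLens[0] = μ.colLen 0 := by
        rw [YoungDiagram.get_rowLens, YoungDiagram.rowLen_transpose]
      rw [← this]
      exact List.getElem_mem hlen
    · omega

lemma sup_conjP (p : Nat.Partition k) :
    (conjP p).parts.sup = Multiset.card p.parts := by
  show (((toYD p).transpose.rowLens : Multiset ℕ)).sup = _
  rw [sup_coe_rowLens_transpose]
  have h1 : ((toYD p).rowLens : Multiset ℕ).card = Multiset.card p.parts := by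
    rw [coe_rowLens_toYD]
  rw [Multiset.coe_card, YoungDiagram.length_rowLens] at h1
  exact h1

/-- Summing any function of the largest part over partitions equals summing it of the
number of parts. -/
lemma sum_sup_eq_sum_card {M : Type*} [AddCommMonoid M] (k : ℕ) (f : ℕ → M) :
    ∑ Y : Nat.Partition k, f Y.parts.sup = ∑ Y : Nat.Partition k, f (Multiset.card Y.parts) := by
  have hinv : Function.Involutive (conjP (k := k)) := conjP_conjP
  rw [← Equiv.sum_comp hinv.toPerm (fun Y => f (Multiset.card Y.parts))]
  apply Finset.sum_congr rfl
  intro Y _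
  have : Multiset.card ((hinv.toPerm : Nat.Partition k → Nat.Partition k) Y).parts
      = Y.parts.sup := by
    show Multiset.card (conjP Y).parts = Y.parts.sup
    conv_rhs => rw [← conjP_conjP Y]
    rw [sup_conjP]
  rw [this]

end Stmt14Aux


namespace Stmt14Aux
open Finset PowerSeries Finset.HasAntidiagonal

noncomputable def geomS (u : Polynomial ℤ) (l : ℕ) : PowerSeries (Polynomial ℤ) :=
  PowerSeries.mk fun m => if l ∣ m then u ^ (m / l) else 0

lemma geomS_mul (u : Polynomial ℤ) (l : ℕ) (hl : 0 < l) :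
    geomS u l * (1 - PowerSeries.C (R := Polynomial ℤ) u * X ^ l) = 1 := by
  ext k : 1
  rw [mul_sub, mul_one, map_sub, PowerSeries.coeff_one]
  have h2 : geomS u l * (PowerSeries.C (R := Polynomial ℤ) u * X ^ l)
      = (geomS u l * PowerSeries.C (R := Polynomial ℤ) u) * X ^ l := by ring
  rw [h2, PowerSeries.coeff_mul_X_pow', PowerSeries.coeff_mul_C]
  rcases Nat.eq_zero_or_pos k with rfl | hk
  · rw [if_pos rfl, if_neg (by omega : ¬ l ≤ 0), sub_zero]
    simp [geomS]
  · rw [if_neg (by omega : ¬ k = 0)]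
    by_cases hdvd : l ∣ k
    · have hlk : l ≤ k := Nat.le_of_dvd hk hdvd
      rw [if_pos hlk]
      have hdvd' : l ∣ k - l := (Nat.dvd_sub hdvd dvd_rfl)
      simp only [geomS, coeff_mk, if_pos hdvd, if_pos hdvd']
      have : (k - l) / l = k / l - 1 := by
        obtain ⟨c, rfl⟩ := hdvd
        have hc : 0 < c := by
          rcases Nat.eq_zero_or_pos c with rfl | h
          · simp at hk
          · exact h
        rw [Nat.mul_div_cancel_left _ hl]
        have : l * c - l = l * (c - 1) := by
          rw [Nat.mul_sub_left_distrib, mul_one]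
        rw [this, Nat.mul_div_cancel_left _ hl]
      rw [this]
      have hq : 0 < k / l := Nat.div_pos hlk hl
      rw [sub_eq_zero, ← pow_succ]
      congr 1
      omega
    · simp only [geomS, coeff_mk, if_neg hdvd]
      rw [zero_sub, neg_eq_zero]
      split_ifs with hlk hdvd'
      · exact absurd (Nat.sub_add_cancel hlk ▸ Nat.dvd_add hdvd' dvd_rfl) hdvd
      · exact zero_mul u
      · rfl



set_option maxHeartbeats 1000000 in
theorem coeff_prod_geomS (u : ℕ → Polynomial ℤ) (k : ℕ) (s : Finset ℕ)
    (hs : ∀ i ∈ s, 0 < i) :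
    PowerSeries.coeff (R := Polynomial ℤ) k (∏ i ∈ s, geomS (u i) i) =
      ∑ p ∈ Finset.univ.filter (fun p : Nat.Partition k => ∀ j ∈ p.parts, j ∈ s),
        ∏ i ∈ s, u i ^ p.parts.count i := by
  classical
  rw [PowerSeries.coeff_prod]
  simp only [geomS, coeff_mk]
  rw [← Finset.sum_filter_of_ne (p := fun f : ℕ →₀ ℕ => ∀ i ∈ s, i ∣ f i)
    (by
      intro f _ hne i hi
      by_contra hdvd
      exact hne (Finset.prod_eq_zero hi (by rw [if_neg hdvd])))]
  symm
  set φ : (p : Nat.Partition k) →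
      p ∈ Finset.univ.filter (fun p : Nat.Partition k => ∀ j ∈ p.parts, j ∈ s) → (ℕ →₀ ℕ) :=
    fun p _ => {
      toFun := fun i => p.parts.count i • i
      support := Finset.filter (fun i => i ≠ 0) p.parts.toFinset
      mem_support_toFun := fun a => by
        simp only [smul_eq_mul, ne_eq, mul_eq_zero, Multiset.count_eq_zero]
        rw [not_or, not_not]
        simp only [Multiset.mem_toFinset, not_not, mem_filter] }
  apply Finset.sum_bij φ
  · intro a ha
    simp only [φ, mem_filter, mem_finsuppAntidiag, Finsupp.coe_mk, smul_eq_mul]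
    simp only [mem_univ, true_and, mem_filter] at ha
    refine ⟨⟨?_, ?_⟩, fun i hi => ?_⟩
    · conv_rhs => rw [← a.parts_sum]
      rw [Finset.sum_multiset_count_of_subset _ s]
      · simp only [smul_eq_mul]
      · intro i
        simp only [Multiset.mem_toFinset]
        exact ha i
    · intro i hi
      have hi' : i ∈ a.parts.toFinset := Finset.mem_of_mem_filter _ hi
      exact ha i (Multiset.mem_toFinset.mp hi')
    · exact dvd_mul_left i _
  · intro p₁ hp₁ p₂ hp₂ h
    apply Nat.Partition.ext
    simp only [mem_univ, true_and, mem_filter] at hp₁ hp₂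
    ext i
    simp only [φ, ne_eq, Multiset.mem_toFinset, not_not, smul_eq_mul, Finsupp.mk.injEq] at h
    by_cases hi : i = 0
    · rw [hi]
      rw [Multiset.count_eq_zero_of_notMem]
      · rw [Multiset.count_eq_zero_of_notMem]
        intro a; exact Nat.lt_irrefl 0 (hs 0 (hp₂ 0 a))
      intro a; exact Nat.lt_irrefl 0 (hs 0 (hp₁ 0 a))
    · rw [← mul_left_inj' hi]
      rw [funext_iff] at h
      exact h.2 i
  · simp only [φ, mem_filter, mem_finsuppAntidiag, mem_univ, true_and]
    rintro f ⟨⟨hf₁, hf₂⟩, hf₃⟩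
    refine ⟨⟨∑ i ∈ s, Multiset.replicate (f i / i) i, ?_, ?_⟩, ?_, ?_⟩
    · intro i hi
      simp only [Multiset.mem_sum] at hi
      rcases hi with ⟨t, ht, z⟩
      apply hs
      rwa [Multiset.eq_of_mem_replicate z]
    · simp_rw [Multiset.sum_sum, Multiset.sum_replicate, Nat.nsmul_eq_mul]
      rw [← hf₁]
      refine sum_congr rfl fun i hi => Nat.div_mul_cancel (hf₃ i hi)
    · intro i hi
      rw [Multiset.mem_sum] at hi
      rcases hi with ⟨j, hj₁, hj₂⟩
      rwa [Multiset.eq_of_mem_replicate hj₂]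
    · ext i
      simp_rw [Multiset.count_sum', Multiset.count_replicate, sum_ite_eq']
      simp only [ne_eq, Multiset.mem_toFinset, not_not, smul_eq_mul, ite_mul, zero_mul,
        Finsupp.coe_mk]
      split_ifs with h
      · exact Nat.div_mul_cancel (hf₃ i h)
      · apply symm
        rw [← Finsupp.notMem_support_iff]
        exact fun hmem => h (hf₂ hmem)
  · intro p hp
    simp only [mem_univ, true_and, mem_filter] at hp
    apply Finset.prod_congr rfl
    intro i hi
    have hipos := hs i hi
    simp only [φ, Finsupp.coe_mk, smul_eq_mul]
    rw [if_pos (dvd_mul_left i _), Nat.mul_div_cancel _ hipos]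


/-- the partition series with number-of-parts statistic -/
noncomputable def Fc (n i : ℕ) : PowerSeries (Polynomial ℤ) :=
  PowerSeries.mk fun k => ∑ Y : Nat.Partition k,
    (Polynomial.X : Polynomial ℤ) ^ (2 * (n * k - i * Multiset.card Y.parts))

lemma coeff_Fc_eq (n i D k : ℕ) (hi : 1 ≤ i) (hin : i ≤ n) (hk : k ≤ D) :
    PowerSeries.coeff (R := Polynomial ℤ) k (Fc n i) =
      PowerSeries.coeff (R := Polynomial ℤ) k
        (∏ l ∈ Finset.Icc 1 D, geomS ((Polynomial.X : Polynomial ℤ) ^ (2 * (n * l - i))) l) := by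
  rw [coeff_prod_geomS _ _ _ (fun l hl => (Finset.mem_Icc.mp hl).1)]
  have hfilter : Finset.univ.filter
      (fun p : Nat.Partition k => ∀ j ∈ p.parts, j ∈ Finset.Icc 1 D) = Finset.univ := by
    apply Finset.filter_true_of_mem
    intro p _ j hj
    refine Finset.mem_Icc.mpr ⟨p.parts_pos hj, le_trans ?_ hk⟩
    calc j ≤ p.parts.sum := Multiset.le_sum_of_mem hj
    _ = k := p.parts_sum
  rw [hfilter, Fc, coeff_mk]
  apply Finset.sum_congr rfl
  intro p _
  have hsub : p.parts.toFinset ⊆ Finset.Icc 1 D := by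
    intro j hj
    rw [Multiset.mem_toFinset] at hj
    refine Finset.mem_Icc.mpr ⟨p.parts_pos hj, le_trans ?_ hk⟩
    calc j ≤ p.parts.sum := Multiset.le_sum_of_mem hj
    _ = k := p.parts_sum
  have h1 : ∑ l ∈ Finset.Icc 1 D, p.parts.count l • l = k := by
    rw [← Finset.sum_multiset_count_of_subset _ _ hsub, p.parts_sum]
  have h2 : ∑ l ∈ Finset.Icc 1 D, p.parts.count l = Multiset.card p.parts := by
    rw [← Multiset.toFinset_sum_count_eq]
    exact (Finset.sum_subset hsub (fun x _ hx => by
      rw [Multiset.count_eq_zero_of_notMem (fun hmem => hx (Multiset.mem_toFinset.mpr hmem))])).symm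
  have key : ∑ l ∈ Finset.Icc 1 D, (2 * (n * l - i)) * p.parts.count l
      = 2 * (n * k - i * Multiset.card p.parts) := by
    have hterm : ∀ l ∈ Finset.Icc 1 D,
        (n * l - i) * p.parts.count l + i * p.parts.count l = n * (p.parts.count l • l) := by
      intro l hl
      have h1l : 1 ≤ l := (Finset.mem_Icc.mp hl).1
      have : i ≤ n * l := le_trans hin (Nat.le_mul_of_pos_right n h1l)
      have : (n * l - i) + i = n * l := Nat.sub_add_cancel this
      calc (n * l - i) * p.parts.count l + i * p.parts.count l
          = ((n * l - i) + i) * p.parts.count l := by ring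
        _ = (n * l) * p.parts.count l := by rw [this]
        _ = n * (p.parts.count l • l) := by simp [smul_eq_mul]; ring
    have hsum : (∑ l ∈ Finset.Icc 1 D, (n * l - i) * p.parts.count l)
        + i * Multiset.card p.parts = n * k := by
      have hsum' : (∑ l ∈ Finset.Icc 1 D, (n * l - i) * p.parts.count l)
          + i * ∑ l ∈ Finset.Icc 1 D, p.parts.count l
          = n * ∑ l ∈ Finset.Icc 1 D, p.parts.count l • l := by
        rw [Finset.mul_sum, Finset.mul_sum, ← Finset.sum_add_distrib]
        exact Finset.sum_congr rfl hterm
      rw [h1, h2] at hsum'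
      exact hsum'
    have hx : ∑ l ∈ Finset.Icc 1 D, (2 * (n * l - i)) * p.parts.count l
        = 2 * ∑ l ∈ Finset.Icc 1 D, (n * l - i) * p.parts.count l := by
      rw [Finset.mul_sum]; exact Finset.sum_congr rfl fun l _ => by ring
    rw [hx]
    congr 1
    set a := ∑ l ∈ Finset.Icc 1 D, (n * l - i) * p.parts.count l
    set b := i * Multiset.card p.parts
    set c := n * k
    omega
  rw [← key, ← Finset.prod_pow_eq_pow_sum]
  apply Finset.prod_congr rfl
  intro l _
  rw [← pow_mul]

lemma coeff_Fc_mul_P (n i D : ℕ) (hi : 1 ≤ i) (hin : i ≤ n) (d : ℕ) (hd : d ≤ D) :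
    PowerSeries.coeff (R := Polynomial ℤ) d (Fc n i *
      ∏ l ∈ Finset.Icc 1 D, (1 - PowerSeries.C (R := Polynomial ℤ)
        ((Polynomial.X : Polynomial ℤ) ^ (2 * (n * l - i))) * X ^ l)) =
      if d = 0 then 1 else 0 := by
  set P := ∏ l ∈ Finset.Icc 1 D, (1 - PowerSeries.C (R := Polynomial ℤ)
      ((Polynomial.X : Polynomial ℤ) ^ (2 * (n * l - i))) * X ^ l) with hP
  set G := ∏ l ∈ Finset.Icc 1 D, geomS ((Polynomial.X : Polynomial ℤ) ^ (2 * (n * l - i))) l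
    with hG
  have hGP : G * P = 1 := by
    rw [hG, hP, ← Finset.prod_mul_distrib]
    rw [Finset.prod_eq_one]
    intro l hl
    exact geomS_mul _ _ (Finset.mem_Icc.mp hl).1
  have : PowerSeries.coeff (R := Polynomial ℤ) d (Fc n i * P)
      = PowerSeries.coeff (R := Polynomial ℤ) d (G * P) := by
    rw [PowerSeries.coeff_mul, PowerSeries.coeff_mul]
    apply Finset.sum_congr rfl
    rintro ⟨a, b⟩ hab
    rw [Finset.HasAntidiagonal.mem_antidiagonal] at hab
    have ha : a ≤ D := le_trans (le_trans (Nat.le_add_right a b) hab.le) hd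
    rw [coeff_Fc_eq n i D a hi hin ha]
  rw [this, hGP, PowerSeries.coeff_one]

lemma coeff_prod_near_one {n : ℕ} (H : Fin n → PowerSeries (Polynomial ℤ)) (D : ℕ)
    (hH : ∀ β : Fin n, ∀ e ≤ D, PowerSeries.coeff (R := Polynomial ℤ) e (H β) =
      if e = 0 then 1 else 0) :
    ∀ m ≤ D, PowerSeries.coeff (R := Polynomial ℤ) m (∏ β : Fin n, H β) =
      if m = 0 then 1 else 0 := by
  intro m hm
  rcases Nat.eq_zero_or_pos m with rfl | hmpos
  · rw [if_pos rfl, PowerSeries.coeff_zero_eq_constantCoeff, map_prod]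
    rw [Finset.prod_eq_one]
    intro β _
    have := hH β 0 (Nat.zero_le _)
    rw [PowerSeries.coeff_zero_eq_constantCoeff] at this
    simpa using this
  · rw [if_neg (by omega), PowerSeries.coeff_prod]
    apply Finset.sum_eq_zero
    intro f hf
    rw [Finset.mem_finsuppAntidiag] at hf
    have hsum := hf.1
    have : ∃ β : Fin n, f β ≠ 0 := by
      by_contra hall
      push_neg at hall
      rw [Finset.sum_eq_zero (fun β _ => hall β)] at hsum
      omega
    obtain ⟨β, hβ⟩ := this
    apply Finset.prod_eq_zero (Finset.mem_univ β)
    have hfle : f β ≤ m := by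
      rw [← hsum]
      exact Finset.single_le_sum (fun _ _ => Nat.zero_le _) (Finset.mem_univ β)
    rw [hH β (f β) (le_trans hfle hm), if_neg hβ]



/-- the partition series with largest-part statistic -/
noncomputable def Fs (n : ℕ) (β : Fin n) : PowerSeries (Polynomial ℤ) :=
  PowerSeries.mk fun k => ∑ Y : Nat.Partition k,
    (Polynomial.X : Polynomial ℤ) ^ (2 * (n * k - ((β : ℕ) + 1) * Y.parts.sup))

lemma Fs_eq_Fc (n : ℕ) (β : Fin n) : Fs n β = Fc n ((β : ℕ) + 1) := by
  ext k : 1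
  rw [Fs, Fc, coeff_mk, coeff_mk]
  exact sum_sup_eq_sum_card k
    (fun t => (Polynomial.X : Polynomial ℤ) ^ (2 * (n * k - ((β : ℕ) + 1) * t)))

lemma pair_sum (n : ℕ) (g : Fin n → Fin n → ℕ) :
    ∑ p ∈ Finset.univ.filter (fun p : Fin n × Fin n => p.1 < p.2), g p.1 p.2 =
      ∑ β : Fin n, ∑ α ∈ Finset.univ.filter (fun α : Fin n => α < β), g α β := by
  rw [Finset.sum_filter, Fintype.sum_prod_type]
  rw [Finset.sum_comm]
  apply Finset.sum_congr rfl
  intro β _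
  rw [Finset.sum_filter]

lemma sum_antidiagonalTuple_eq (n m : ℕ) (g : (Fin n → ℕ) → Polynomial ℤ) :
    ∑ x ∈ Finset.Nat.antidiagonalTuple n m, g x =
      ∑ f ∈ finsuppAntidiag (Finset.univ : Finset (Fin n)) m, g ⇑f := by
  refine Finset.sum_nbij' (i := fun x => Finsupp.equivFunOnFinite.symm x)
    (j := fun f => ⇑f) ?_ ?_ ?_ ?_ ?_
  · intro x hx
    rw [Finset.Nat.mem_antidiagonalTuple] at hx
    rw [Finset.mem_finsuppAntidiag]
    constructor
    · rw [← hx]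
      apply Finset.sum_congr rfl
      intro i _
      simp
    · exact Finset.subset_univ _
  · intro f hf
    rw [Finset.mem_finsuppAntidiag] at hf
    rw [Finset.Nat.mem_antidiagonalTuple]
    exact hf.1
  · intro x _
    exact Finsupp.equivFunOnFinite.apply_symm_apply x
  · intro f _
    simp
  · intro x _
    exact congrArg g (Finsupp.equivFunOnFinite.apply_symm_apply x).symm

lemma prod_Icc_eq_prod_fin {M : Type} [CommMonoid M] (n : ℕ) (f : ℕ → M) :
    ∏ i ∈ Finset.Icc 1 n, f i = ∏ β : Fin n, f ((β : ℕ) + 1) := by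
  rw [Fin.prod_univ_eq_prod_range (fun j => f (j + 1)) n]
  rw [← Finset.Ico_add_one_right_eq_Icc, Finset.prod_Ico_eq_prod_range]
  exact Finset.prod_congr (by norm_num) fun i _ => by rw [Nat.add_comm]



set_option maxHeartbeats 1000000 in
lemma series_decomp (n : ℕ) (e : Fin n → ℤ) :
    (PowerSeries.mk fun k =>
        if hA : (∑ α, (e α * (e α - 1) / 2).toNat) ≤ k then
          ∑ x ∈ Finset.Nat.antidiagonalTuple n
              (k - ∑ α, (e α * (e α - 1) / 2).toNat),
            ∑ Y : ((β : Fin n) → Nat.Partition (x β)),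
              ∏ β : Fin n,
                (Polynomial.X : Polynomial ℤ) ^
                  (2 * (n * x β - ((β : ℕ) + 1) * (Y β).parts.sup) +
                    2 * ∑ α ∈ Finset.univ.filter (fun α : Fin n => α < β),
                      ((e β - e α - 1).natAbs.choose 2))
        else 0)
    = (PowerSeries.C (R := Polynomial ℤ)
        ((Polynomial.X : Polynomial ℤ) ^
          (2 * ∑ p ∈ Finset.univ.filter (fun p : Fin n × Fin n => p.1 < p.2),
            ((e p.2 - e p.1 - 1).natAbs.choose 2))) *
        ∏ β : Fin n, Fs n β) * X ^ (∑ α, (e α * (e α - 1) / 2).toNat) := by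
  set A := ∑ α, (e α * (e α - 1) / 2).toNat with hA
  set Bp := ∑ p ∈ Finset.univ.filter (fun p : Fin n × Fin n => p.1 < p.2),
      ((e p.2 - e p.1 - 1).natAbs.choose 2) with hBp
  set c : Fin n → ℕ := fun β => ∑ α ∈ Finset.univ.filter (fun α : Fin n => α < β),
      ((e β - e α - 1).natAbs.choose 2) with hc
  have hpair : ∑ β : Fin n, c β = Bp :=
    (pair_sum n fun α β => ((e β - e α - 1).natAbs.choose 2)).symm
  ext k : 1
  rw [coeff_mk, PowerSeries.coeff_mul_X_pow']
  by_cases hAk : A ≤ k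
  · rw [dif_pos hAk, if_pos hAk, PowerSeries.coeff_C_mul, PowerSeries.coeff_prod]
    have hsummand : ∀ x : Fin n → ℕ,
        (∑ Y : ((β : Fin n) → Nat.Partition (x β)), ∏ β : Fin n,
          (Polynomial.X : Polynomial ℤ) ^
            (2 * (n * x β - ((β : ℕ) + 1) * (Y β).parts.sup) + 2 * c β))
        = Polynomial.X ^ (2 * Bp) * ∏ β : Fin n,
            PowerSeries.coeff (R := Polynomial ℤ) (x β) (Fs n β) := by
      intro x
      have h1 : ∀ Y : ((β : Fin n) → Nat.Partition (x β)),
          (∏ β : Fin n, (Polynomial.X : Polynomial ℤ) ^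
            (2 * (n * x β - ((β : ℕ) + 1) * (Y β).parts.sup) + 2 * c β))
          = Polynomial.X ^ (2 * Bp) * ∏ β : Fin n, (Polynomial.X : Polynomial ℤ) ^
              (2 * (n * x β - ((β : ℕ) + 1) * (Y β).parts.sup)) := by
        intro Y
        have : ∀ β : Fin n, (Polynomial.X : Polynomial ℤ) ^
            (2 * (n * x β - ((β : ℕ) + 1) * (Y β).parts.sup) + 2 * c β)
            = (Polynomial.X : Polynomial ℤ) ^ (2 * c β) *
              (Polynomial.X : Polynomial ℤ) ^
                (2 * (n * x β - ((β : ℕ) + 1) * (Y β).parts.sup)) := by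
          intro β
          rw [pow_add, mul_comm]
        rw [Finset.prod_congr rfl (fun β _ => this β), Finset.prod_mul_distrib]
        congr 1
        rw [Finset.prod_pow_eq_pow_sum, ← Finset.mul_sum, hpair]
      rw [Finset.sum_congr rfl (fun Y _ => h1 Y), ← Finset.mul_sum]
      congr 1
      simp_rw [Fs, coeff_mk]
      exact (Fintype.prod_sum (κ := fun β : Fin n => Nat.Partition (x β))
        (fun β Y => (Polynomial.X : Polynomial ℤ) ^
          (2 * (n * x β - ((β : ℕ) + 1) * Y.parts.sup)))).symm
    rw [Finset.sum_congr rfl (fun x _ => hsummand x), ← Finset.mul_sum]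
    congr 1
    exact sum_antidiagonalTuple_eq n (k - A)
      (fun x => ∏ β : Fin n, PowerSeries.coeff (R := Polynomial ℤ) (x β) (Fs n β))
  · rw [dif_neg hAk, if_neg hAk]



end Stmt14Aux

open Stmt14Aux in
/-- the `m = 1` Poincaré series of the (−)-cells, Theorem
`thm:poincare_zastava` + Corollary `cor:Zminus,m=1`: for `e ∈ ℤⁿ`, with
`A = Σ_α e_α(e_α−1)/2` and `B = Σ_{α<β} C(|e_β−e_α−1|, 2)`,
`Σ_{(B₁,…,Bₙ)} q^{d(B₁,…,Bₙ)} Π_β t^{2(n|Y_β| − β·l(Y_β) + Σ_{α<β}C(|e_β−e_α−1|,2))}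
 = q^A · t^{2B} · Π_{i=1}^n Π_{l≥1} (1 − t^{2(nl−i)} q^l)^{−1}`,
where the sum is over `n`-tuples of extended Young diagrams (equivalently `n`-tuples
of partitions `(Y₁,…,Yₙ)` — the charges `e` being fixed), `l(Y)` is the number of
columns (largest part) of `Y`, and `d = A + Σ_β |Y_β|`.
The identity is stated coefficientwise after multiplying both sides by the truncated
product `Π_{i=1}^n Π_{l=1}^D (1 − t^{2(nl−i)} q^l)`, which does not affect the
`q^d`-coefficients for `d ≤ D`. -/
theorem stmt14 (n : ℕ) (hn : 0 < n) (e : Fin n → ℤ) (D : ℕ) :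
    ∀ d ≤ D,
      (PowerSeries.coeff (R := Polynomial ℤ) d)
        ((PowerSeries.mk fun k =>
            if hA : (∑ α, (e α * (e α - 1) / 2).toNat) ≤ k then
              ∑ x ∈ Finset.Nat.antidiagonalTuple n
                  (k - ∑ α, (e α * (e α - 1) / 2).toNat),
                ∑ Y : ((β : Fin n) → Nat.Partition (x β)),
                  ∏ β : Fin n,
                    (Polynomial.X : Polynomial ℤ) ^
                      (2 * (n * x β - ((β : ℕ) + 1) * (Y β).parts.sup) +
                        2 * ∑ α ∈ Finset.univ.filter (fun α : Fin n => α < β),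
                          ((e β - e α - 1).natAbs.choose 2))
            else 0) *
          ∏ i ∈ Finset.Icc 1 n, ∏ l ∈ Finset.Icc 1 D,
            (1 - PowerSeries.C (R := Polynomial ℤ)
                ((Polynomial.X : Polynomial ℤ) ^ (2 * (n * l - i))) *
              PowerSeries.X ^ l)) =
      if d = (∑ α, (e α * (e α - 1) / 2).toNat) then
        (Polynomial.X : Polynomial ℤ) ^
          (2 * ∑ p ∈ Finset.univ.filter (fun p : Fin n × Fin n => p.1 < p.2),
            ((e p.2 - e p.1 - 1).natAbs.choose 2))
      else 0 := by
  intro d hd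
  rw [series_decomp n e]
  set A := ∑ α, (e α * (e α - 1) / 2).toNat with hA
  set Bp := ∑ p ∈ Finset.univ.filter (fun p : Fin n × Fin n => p.1 < p.2),
      ((e p.2 - e p.1 - 1).natAbs.choose 2) with hBp
  set Pf : ℕ → PowerSeries (Polynomial ℤ) := fun i => ∏ l ∈ Finset.Icc 1 D,
      (1 - PowerSeries.C (R := Polynomial ℤ)
        ((Polynomial.X : Polynomial ℤ) ^ (2 * (n * l - i))) * PowerSeries.X ^ l) with hPf
  have hPicc : (∏ i ∈ Finset.Icc 1 n, ∏ l ∈ Finset.Icc 1 D,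
      (1 - PowerSeries.C (R := Polynomial ℤ)
        ((Polynomial.X : Polynomial ℤ) ^ (2 * (n * l - i))) * PowerSeries.X ^ l))
      = ∏ β : Fin n, Pf ((β : ℕ) + 1) := prod_Icc_eq_prod_fin n Pf
  rw [hPicc]
  set H : Fin n → PowerSeries (Polynomial ℤ) := fun β => Fc n ((β : ℕ) + 1) * Pf ((β : ℕ) + 1)
    with hH
  have hrearr : (PowerSeries.C (R := Polynomial ℤ) ((Polynomial.X : Polynomial ℤ) ^ (2 * Bp)) *
        ∏ β : Fin n, Fs n β) * PowerSeries.X ^ A * ∏ β : Fin n, Pf ((β : ℕ) + 1)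
      = (PowerSeries.C (R := Polynomial ℤ) ((Polynomial.X : Polynomial ℤ) ^ (2 * Bp)) *
        ∏ β : Fin n, H β) * PowerSeries.X ^ A := by
    have : ∏ β : Fin n, H β = (∏ β : Fin n, Fs n β) * ∏ β : Fin n, Pf ((β : ℕ) + 1) := by
      rw [← Finset.prod_mul_distrib]
      exact Finset.prod_congr rfl fun β _ => by rw [hH, Fs_eq_Fc]
    rw [this]
    ring
  rw [hrearr, PowerSeries.coeff_mul_X_pow', PowerSeries.coeff_C_mul]
  have hHnear : ∀ β : Fin n, ∀ e' ≤ D, PowerSeries.coeff (R := Polynomial ℤ) e' (H β) =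
      if e' = 0 then 1 else 0 := by
    intro β e' he'
    exact coeff_Fc_mul_P n ((β : ℕ) + 1) D (Nat.succ_le_succ (Nat.zero_le _))
      (Nat.succ_le_of_lt β.is_lt) e' he'
  by_cases hAd : A ≤ d
  · rw [if_pos hAd]
    rw [coeff_prod_near_one H D hHnear (d - A) (by omega)]
    by_cases hdA : d = A
    · rw [if_pos (by omega : d - A = 0), if_pos hdA, mul_one]
    · rw [if_neg (by omega : ¬ d - A = 0), if_neg hdA, mul_zero]
  · rw [if_neg hAd, if_neg (by omega : ¬ d = A)]
end
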